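/- arXiv:2505.24516 — 6 statements merged into one kernel-verified Lean document; each statement's English description precedes it below -/
import Mathlib

section
/- Let n ≥ 1, T > 0, α₁, …, αₙ ∈ (0,1), and let p > max{1/α_j : j ∈ {1,…,n}}. Let f = (f₁,…,fₙ) : ℝⁿ × [0,T] → ℝⁿ be an L^p-Carathéodory function, ξ ∈ ℝⁿ, and let φ = (φ₁,…,φₙ) : [0,T] → ℝⁿ be continuous and satisfy φ_j(t) = ξ_j + (1/Γ(α_j)) ∫₀ᵗ (t−s)^{α_j−1} f_j(φ(s), s) ds for every j and every t ∈ [0,T]. Then φ(0) = ξ and, for each j ∈ {1,…,n}, J^{1−α_j}(φ_j − ξ_j)(t) = ∫₀ᵗ f_j(φ(s), s) ds for all t ∈ [0,T]; in particular J^{1−α_j}(φ_j − ξ_j) belongs to W^{1,p}(0,T) and its weak derivative equals f_j(φ(t), t) for a.e. t, i.e., ᶜD^{α_j}_t φ_j(t) = f_j(φ(t), t) a.e. on [0,T]. -/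
open MeasureTheory Real Set

/-- The Riemann–Liouville fractional integral of order `α`:
`J^α g (t) = (1/Γ(α)) ∫₀ᵗ (t-s)^(α-1) g(s) ds`. -/
noncomputable def rlInt {E : Type*} [NormedAddCommGroup E] [NormedSpace ℝ E]
    (α : ℝ) (g : ℝ → E) (t : ℝ) : E :=
  (Real.Gamma α)⁻¹ • ∫ s in (0:ℝ)..t, (t - s) ^ (α - 1) • g s

/-- `f : ℝⁿ × [0,T] → ℝⁿ` is a Carathéodory function: `x ↦ f x t` is continuous for a.e.
`t ∈ [0,T]` and `t ↦ f x t` is Lebesgue measurable for every `x`. -/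
def IsCaratheodory {n : ℕ} (T : ℝ)
    (f : EuclideanSpace ℝ (Fin n) → ℝ → EuclideanSpace ℝ (Fin n)) : Prop :=
  (∀ᵐ t ∂(volume.restrict (Icc (0:ℝ) T)), Continuous fun x => f x t) ∧
  ∀ x, Measurable fun t => f x t

/-- `f` is an `L^p`-Carathéodory function: Carathéodory, with an `L^p` growth bound
`‖f(x,t)‖ ≤ C‖x‖ + γ(t)` and an `L^p` Lipschitz bound `‖f(x,t) - f(y,t)‖ ≤ ℓ(t)‖x - y‖`. -/
def IsLpCaratheodory {n : ℕ} (p T : ℝ)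
    (f : EuclideanSpace ℝ (Fin n) → ℝ → EuclideanSpace ℝ (Fin n)) : Prop :=
  IsCaratheodory T f ∧
  (∃ C > (0:ℝ), ∃ γ : ℝ → ℝ, MemLp γ (ENNReal.ofReal p) (volume.restrict (Icc (0:ℝ) T)) ∧
    ∀ᵐ t ∂(volume.restrict (Icc (0:ℝ) T)), ∀ x, ‖f x t‖ ≤ C * ‖x‖ + γ t) ∧
  (∃ ℓ : ℝ → ℝ, MemLp ℓ (ENNReal.ofReal p) (volume.restrict (Icc (0:ℝ) T)) ∧
    ∀ᵐ t ∂(volume.restrict (Icc (0:ℝ) T)), ∀ x y, ‖f x t - f y t‖ ≤ ℓ t * ‖x - y‖)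

/-!
Put `g_j(s) = f_j(φ(s), s)`. By the integral equation, `φ_j - ξ_j = J^{α_j} g_j` on `[0,T]`, so
the claim is the semigroup law `J^{1-α} (J^α g) = J^1 g`. Exchanging the order of integration
over the triangle `0 < r < s < t` reduces it to the Beta integral
`∫_r^t (t-s)^{-α} (s-r)^{α-1} ds = Γ(α) Γ(1-α)`. Fubini applies because `g_j ∈ L^p ⊆ L¹`
(`p > 1/α_j > 1`), which follows from the growth bound on `f` and the boundedness of `φ` on
`[0,T]`, once `s ↦ f(φ(s), s)` is known to be measurable, as for any Carathéodory function.
-/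

open Function TopologicalSpace

theorem integral_rpow_mul_one_sub_rpow {a b : ℝ} (ha : 0 < a) (hb : 0 < b) :
    ∫ u in (0:ℝ)..1, u ^ (a - 1) * (1 - u) ^ (b - 1) = Gamma a * Gamma b / Gamma (a + b) := by
  have hΓ : Gamma (a + b) ≠ 0 := (Gamma_pos_of_pos (add_pos ha hb)).ne'
  have hc := Complex.Gamma_mul_Gamma_eq_betaIntegral (s := a) (t := b)
    (by simpa using ha) (by simpa using hb)
  have hbeta : Complex.betaIntegral a b
      = ↑(∫ u in (0:ℝ)..1, u ^ (a - 1) * (1 - u) ^ (b - 1)) := by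
    rw [Complex.betaIntegral, ← intervalIntegral.integral_ofReal]
    refine intervalIntegral.integral_congr fun u hu => ?_
    rw [uIcc_of_le zero_le_one] at hu
    simp only [Complex.ofReal_mul, Complex.ofReal_cpow hu.1,
      Complex.ofReal_cpow (sub_nonneg.2 hu.2)]
    push_cast
    rfl
  rw [hbeta, ← Complex.ofReal_add, Complex.Gamma_ofReal, Complex.Gamma_ofReal,
    Complex.Gamma_ofReal, ← Complex.ofReal_mul, ← Complex.ofReal_mul] at hc
  rw [eq_div_iff hΓ, mul_comm]
  exact_mod_cast hc.symm

theorem intervalIntegrable_sub_rpow_mul_sub_rpow {a b r t : ℝ} (ha : 0 < a) (hb : 0 < b)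
    (hrt : r < t) :
    IntervalIntegrable (fun s => (t - s) ^ (b - 1) * (s - r) ^ (a - 1)) volume r t := by
  obtain ⟨m, hrm, hmt⟩ := exists_between hrt
  refine IntervalIntegrable.trans (b := m) ?_ ?_
  · have hsing : IntervalIntegrable (fun s : ℝ => (s - r) ^ (a - 1)) volume r m := by
      simpa using (intervalIntegral.intervalIntegrable_rpow' (r := a - 1) (a := 0) (b := m - r)
        (by linarith)).comp_sub_right r
    refine hsing.continuousOn_mul (ContinuousOn.rpow_const (by fun_prop) fun s hs => ?_)
    rw [uIcc_of_le hrm.le] at hs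
    exact Or.inl (by linarith [hs.2])
  · have hsing : IntervalIntegrable (fun s : ℝ => (t - s) ^ (b - 1)) volume m t := by
      simpa using ((intervalIntegral.intervalIntegrable_rpow' (r := b - 1) (a := 0) (b := t - m)
        (by linarith)).comp_sub_left t).symm
    refine hsing.mul_continuousOn (ContinuousOn.rpow_const (by fun_prop) fun s hs => ?_)
    rw [uIcc_of_le hmt.le] at hs
    exact Or.inl (by linarith [hs.1])

theorem integral_sub_rpow_mul_sub_rpow {a b r t : ℝ} (ha : 0 < a) (hb : 0 < b) (hrt : r < t) :
    ∫ s in r..t, (t - s) ^ (b - 1) * (s - r) ^ (a - 1)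
      = (t - r) ^ (a + b - 1) * (Gamma a * Gamma b / Gamma (a + b)) := by
  have hd : 0 < t - r := sub_pos.2 hrt
  have hsub := intervalIntegral.integral_comp_mul_add
    (fun s => (t - s) ^ (b - 1) * (s - r) ^ (a - 1)) hd.ne' r (a := 0) (b := 1)
  simp only [mul_zero, zero_add, mul_one, sub_add_cancel, smul_eq_mul] at hsub
  rw [← mul_inv_cancel_left₀ hd.ne' (∫ s in r..t, _), ← hsub,
    ← integral_rpow_mul_one_sub_rpow ha hb, ← intervalIntegral.integral_const_mul,
    ← intervalIntegral.integral_const_mul]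
  refine intervalIntegral.integral_congr fun u hu => ?_
  rw [uIcc_of_le zero_le_one] at hu
  have h1 : t - ((t - r) * u + r) = (t - r) * (1 - u) := by ring
  have h2 : (t - r) * u + r - r = (t - r) * u := by ring
  have h3 : (t - r) ^ (a + b - 1) = (t - r) * ((t - r) ^ (b - 1) * (t - r) ^ (a - 1)) := by
    rw [← rpow_add hd, show a + b - 1 = 1 + (b - 1 + (a - 1)) by ring, rpow_add hd, rpow_one]
  simp only [h1, h2, mul_rpow hd.le (sub_nonneg.2 hu.2), mul_rpow hd.le hu.1, h3]
  ring

section FractionalIntegral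

variable {E : Type*} [NormedAddCommGroup E] [NormedSpace ℝ E]

theorem rlInt_congr {α t : ℝ} (ht : 0 ≤ t) {g₁ g₂ : ℝ → E} (h : EqOn g₁ g₂ (Icc 0 t)) :
    rlInt α g₁ t = rlInt α g₂ t := by
  unfold rlInt
  congr 1
  refine intervalIntegral.integral_congr fun s hs => ?_
  rw [uIcc_of_le ht] at hs
  simp only [h hs]

variable [CompleteSpace E]

theorem integral_integral_smul_of_integral_eq_const {t c : ℝ} (ht : 0 ≤ t)
    {k : ℝ → ℝ → ℝ} (hk_meas : Measurable (uncurry k))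
    (hk_nonneg : ∀ r ∈ Ioo 0 t, ∀ s ∈ Ioo r t, 0 ≤ k s r)
    (hk_int : ∀ r ∈ Ioo 0 t, IntervalIntegrable (k · r) volume r t)
    (hk : ∀ r ∈ Ioo 0 t, ∫ s in r..t, k s r = c) {g : ℝ → E}
    (hg : IntervalIntegrable g volume 0 t) :
    ∫ s in 0..t, ∫ r in 0..s, k s r • g r = c • ∫ r in 0..t, g r := by
  set μ := volume.restrict (Ioo 0 t)
  set F : ℝ × ℝ → E := {z | z.2 < z.1}.indicator fun z => k z.1 z.2 • g z.2
  have hg' : Integrable g μ :=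
    ((intervalIntegrable_iff_integrableOn_Ioc_of_le ht).1 hg).mono_set Ioo_subset_Ioc_self
  have hslice : ∀ r ∈ Ioo 0 t, Ioo 0 t ∩ Ioi r = Ioo r t := fun r hr => by
    ext s
    simp only [mem_inter_iff, mem_Ioo, mem_Ioi]
    exact ⟨fun h => ⟨h.2, h.1.2⟩, fun h => ⟨⟨hr.1.trans h.1, h.2⟩, h.1⟩⟩
  have hsection : ∀ r ∈ Ioo 0 t, ∫ s, F (s, r) ∂μ = c • g r := fun r hr => by
    change ∫ s, (Ioi r).indicator (fun s => k s r • g r) s ∂μ = _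
    rw [setIntegral_indicator measurableSet_Ioi, hslice r hr, integral_smul_const,
      ← integral_Ioc_eq_integral_Ioo, ← intervalIntegral.integral_of_le hr.2.le, hk r hr]
  have hsection_norm : ∀ r ∈ Ioo 0 t, ∫ s, ‖F (s, r)‖ ∂μ = c * ‖g r‖ := fun r hr => by
    change ∫ s, ‖(Ioi r).indicator (fun s => k s r • g r) s‖ ∂μ = _
    simp only [norm_indicator_eq_indicator_norm, norm_smul]
    rw [setIntegral_indicator measurableSet_Ioi, hslice r hr, integral_mul_const,
      setIntegral_congr_fun measurableSet_Ioo fun s hs => norm_of_nonneg (hk_nonneg r hr s hs),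
      ← integral_Ioc_eq_integral_Ioo, ← intervalIntegral.integral_of_le hr.2.le, hk r hr]
  have hsection_int : ∀ r ∈ Ioo 0 t, Integrable (fun s => F (s, r)) μ := fun r hr => by
    change Integrable ((Ioi r).indicator fun s => k s r • g r) μ
    rw [integrable_indicator_iff measurableSet_Ioi, IntegrableOn,
      Measure.restrict_restrict measurableSet_Ioi, inter_comm, hslice r hr]
    exact (((hk_int r hr).1.mono_set Ioo_subset_Ioc_self).smul_const (g r))
  have hF_meas : AEStronglyMeasurable F (μ.prod μ) :=
    (hk_meas.aestronglyMeasurable.smul (hg'.aestronglyMeasurable.comp_quasiMeasurePreserving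
      Measure.quasiMeasurePreserving_snd)).indicator
      (measurableSet_lt measurable_snd measurable_fst)
  have hae : ∀ᵐ r ∂μ, r ∈ Ioo 0 t := ae_restrict_mem measurableSet_Ioo
  have hF_int : Integrable F (μ.prod μ) :=
    (integrable_prod_iff' hF_meas).2 ⟨hae.mono hsection_int,
      (hg'.norm.const_mul c).congr (hae.mono fun r hr => (hsection_norm r hr).symm)⟩
  calc ∫ s in 0..t, ∫ r in 0..s, k s r • g r
      = ∫ s, ∫ r, F (s, r) ∂μ ∂μ := by
        rw [intervalIntegral.integral_of_le ht, integral_Ioc_eq_integral_Ioo]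
        refine setIntegral_congr_fun measurableSet_Ioo fun s hs => ?_
        change _ = ∫ r, (Iio s).indicator (fun r => k s r • g r) r ∂μ
        rw [setIntegral_indicator measurableSet_Iio, Ioo_inter_Iio, min_eq_right hs.2.le,
          intervalIntegral.integral_of_le hs.1.le, integral_Ioc_eq_integral_Ioo]
    _ = ∫ r, ∫ s, F (s, r) ∂μ ∂μ := integral_integral_swap hF_int
    _ = ∫ r, c • g r ∂μ := integral_congr_ae (hae.mono hsection)
    _ = c • ∫ r in 0..t, g r := by
        rw [integral_smul, intervalIntegral.integral_of_le ht, integral_Ioc_eq_integral_Ioo]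

theorem rlInt_rlInt_of_add_eq_one {a b t : ℝ} (ha : 0 < a) (hb : 0 < b) (hab : a + b = 1)
    (ht : 0 ≤ t) {g : ℝ → E} (hg : IntervalIntegrable g volume 0 t) :
    rlInt b (rlInt a g) t = ∫ s in 0..t, g s := by
  have hkernel : ∀ r ∈ Ioo 0 t, ∫ s in r..t, (t - s) ^ (b - 1) * (s - r) ^ (a - 1)
      = Gamma a * Gamma b := fun r hr => by
    rw [integral_sub_rpow_mul_sub_rpow ha hb hr.2, hab, sub_self, rpow_zero, Gamma_one, div_one,
      one_mul]
  have hswap := integral_integral_smul_of_integral_eq_const ht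
    (k := fun s r => (t - s) ^ (b - 1) * (s - r) ^ (a - 1)) (by fun_prop)
    (fun r _ s hs => mul_nonneg (rpow_nonneg (sub_pos.2 hs.2).le _)
      (rpow_nonneg (sub_pos.2 hs.1).le _))
    (fun r hr => intervalIntegrable_sub_rpow_mul_sub_rpow ha hb hr.2) hkernel hg
  calc rlInt b (rlInt a g) t
      = (Gamma b)⁻¹ • (Gamma a)⁻¹ •
          ∫ s in 0..t, ∫ r in 0..s, ((t - s) ^ (b - 1) * (s - r) ^ (a - 1)) • g r := by
        simp only [rlInt, ← intervalIntegral.integral_smul, smul_comm _ (Gamma a)⁻¹, mul_smul]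
    _ = ∫ s in 0..t, g s := by
        have := (Gamma_pos_of_pos ha).ne'
        have := (Gamma_pos_of_pos hb).ne'
        rw [hswap, smul_smul, smul_smul,
          show (Gamma b)⁻¹ * (Gamma a)⁻¹ * (Gamma a * Gamma b) = 1 by field_simp, one_smul]

end FractionalIntegral

theorem aestronglyMeasurable_comp_of_ae_continuous {α X F : Type*} [MeasurableSpace α]
    {μ : Measure α} [TopologicalSpace X] [MetrizableSpace X] [SecondCountableTopology X]
    [MeasurableSpace X] [OpensMeasurableSpace X] [TopologicalSpace F] [PseudoMetrizableSpace F]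
    [SecondCountableTopology F] [MeasurableSpace F] [BorelSpace F] [Zero F] {f : X → α → F}
    (hcont : ∀ᵐ t ∂μ, Continuous fun x => f x t) (hmeas : ∀ x, Measurable (f x)) {φ : α → X}
    (hφ : AEMeasurable φ μ) : AEStronglyMeasurable (fun t => f (φ t) t) μ := by
  set N := toMeasurable μ {t | ¬Continuous fun x => f x t}
  have hN : ∀ᵐ t ∂μ, t ∉ N :=
    measure_eq_zero_iff_ae_notMem.1 (by rw [measure_toMeasurable]; exact ae_iff.1 hcont)
  -- Killing `f` on the null set `N` makes it continuous in `x` for every `t`, hence jointly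
  -- measurable.
  set f' : X → α → F := fun x => Nᶜ.indicator (f x)
  have hf' : Measurable (uncurry f') := by
    refine measurable_uncurry_of_continuous_of_measurable (fun t => ?_)
      fun x => (hmeas x).indicator (measurableSet_toMeasurable μ _).compl
    by_cases ht : t ∈ N
    · simpa [f', ht] using continuous_const
    · simpa [f', ht] using not_not.1 fun h => ht (subset_toMeasurable μ _ h)
  refine (hf'.comp_aemeasurable (hφ.prodMk aemeasurable_id)).aestronglyMeasurable.congr ?_
  filter_upwards [hN] with t ht
  simp [f', ht]

theorem MeasureTheory.MemLp.of_norm_le_const_add {α F : Type*} [MeasurableSpace α]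
    {μ : Measure α} [IsFiniteMeasure μ] [NormedAddCommGroup F] {p : ENNReal} {γ : α → ℝ}
    (hγ : MemLp γ p μ) {g : α → F} (hg : AEStronglyMeasurable g μ) (c : ℝ)
    (h : ∀ᵐ t ∂μ, ‖g t‖ ≤ c + γ t) : MemLp g p μ :=
  ((memLp_const c).add hγ).of_le hg (h.mono fun _ ht => ht.trans (le_abs_self _))

theorem IsLpCaratheodory.memLp_comp {n : ℕ} {p T : ℝ}
    {f : EuclideanSpace ℝ (Fin n) → ℝ → EuclideanSpace ℝ (Fin n)} (hf : IsLpCaratheodory p T f)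
    {φ : ℝ → EuclideanSpace ℝ (Fin n)} (hφ : ContinuousOn φ (Icc 0 T)) :
    MemLp (fun s => f (φ s) s) (ENNReal.ofReal p) (volume.restrict (Icc 0 T)) := by
  obtain ⟨⟨hcont, hmeas⟩, ⟨C, hC, γ, hγ, hgrowth⟩, -⟩ := hf
  obtain ⟨M, hM⟩ := isCompact_Icc.exists_bound_of_continuousOn hφ
  refine hγ.of_norm_le_const_add (aestronglyMeasurable_comp_of_ae_continuous hcont hmeas
    (hφ.aemeasurable measurableSet_Icc)) (C * M) ?_
  filter_upwards [hgrowth, ae_restrict_mem measurableSet_Icc] with s hs hsT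
  calc ‖f (φ s) s‖ ≤ C * ‖φ s‖ + γ s := hs _
    _ ≤ C * M + γ s := by gcongr; exact hM s hsT

theorem integral_solution_solves_caputo_system_general
    (n : ℕ) (T : ℝ) (hT : 0 < T)
    (α : Fin n → ℝ) (hα : ∀ j, α j ∈ Ioo (0:ℝ) 1)
    (p : ℝ) (hp : ∀ j, 1 / α j < p)
    (f : EuclideanSpace ℝ (Fin n) → ℝ → EuclideanSpace ℝ (Fin n))
    (hf : IsLpCaratheodory p T f) (ξ : EuclideanSpace ℝ (Fin n))
    (φ : ℝ → EuclideanSpace ℝ (Fin n))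
    (hφ : ContinuousOn φ (Icc 0 T))
    (hsol : ∀ j, ∀ t ∈ Icc (0:ℝ) T,
      φ t j = ξ j + (Real.Gamma (α j))⁻¹ * ∫ s in (0:ℝ)..t, (t - s) ^ (α j - 1) * f (φ s) s j) :
    φ 0 = ξ ∧
    ∀ j, (∀ t ∈ Icc (0:ℝ) T,
        rlInt (1 - α j) (fun s => φ s j - ξ j) t = ∫ s in (0:ℝ)..t, f (φ s) s j) ∧
      MemLp (fun s => f (φ s) s j) (ENNReal.ofReal p) (volume.restrict (Icc (0:ℝ) T)) := by
  have hzero : φ 0 = ξ := by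
    ext j
    simpa using hsol j 0 ⟨le_rfl, hT.le⟩
  have hG := hf.memLp_comp hφ
  refine ⟨hzero, fun j => ⟨fun t ht => ?_, (EuclideanSpace.proj (𝕜 := ℝ) j).comp_memLp' hG⟩⟩
  obtain ⟨ha, ha1⟩ := hα j
  have hp1 : 1 ≤ ENNReal.ofReal p := by
    rw [← ENNReal.ofReal_one]
    exact ENNReal.ofReal_le_ofReal ((one_lt_one_div ha ha1).trans (hp j)).le
  have hg : IntervalIntegrable (fun s => f (φ s) s j) volume 0 t :=
    (IntegrableOn.mono_set (((EuclideanSpace.proj (𝕜 := ℝ) j).comp_memLp' hG).integrable hp1)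
      (by rw [uIcc_of_le ht.1]; exact Icc_subset_Icc_right ht.2)).intervalIntegrable
  calc rlInt (1 - α j) (fun s => φ s j - ξ j) t
      = rlInt (1 - α j) (rlInt (α j) fun s => f (φ s) s j) t :=
        rlInt_congr ht.1 fun s hs => by
          rw [hsol j s ⟨hs.1, hs.2.trans ht.2⟩]
          simp [rlInt]
    _ = ∫ s in (0:ℝ)..t, f (φ s) s j :=
        rlInt_rlInt_of_add_eq_one ha (sub_pos.2 ha1) (by ring) ht.1 hg

/-- A continuous solution of the system of integral equations satisfies `φ(0) = ξ` and solves
the Caputo system: `J^{1-α_j}(φ_j - ξ_j)(t) = ∫₀ᵗ f_j(φ(s),s) ds` on `[0,T]`; in particular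
`J^{1-α_j}(φ_j - ξ_j) ∈ W^{1,p}(0,T)` with weak derivative `f_j(φ(t),t)`, since the Nemytskii
function `t ↦ f_j(φ(t),t)` belongs to `L^p(0,T)`. -/
theorem integral_solution_solves_caputo_system
    (n : ℕ) (hn : 1 ≤ n) (T : ℝ) (hT : 0 < T)
    (α : Fin n → ℝ) (hα : ∀ j, α j ∈ Ioo (0:ℝ) 1)
    (p : ℝ) (hp : ∀ j, 1 / α j < p)
    (f : EuclideanSpace ℝ (Fin n) → ℝ → EuclideanSpace ℝ (Fin n))
    (hf : IsLpCaratheodory p T f) (ξ : EuclideanSpace ℝ (Fin n))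
    (φ : ℝ → EuclideanSpace ℝ (Fin n))
    (hφ : ContinuousOn φ (Icc 0 T))
    (hsol : ∀ j, ∀ t ∈ Icc (0:ℝ) T,
      φ t j = ξ j + (Real.Gamma (α j))⁻¹ * ∫ s in (0:ℝ)..t, (t - s) ^ (α j - 1) * f (φ s) s j) :
    φ 0 = ξ ∧
    ∀ j, (∀ t ∈ Icc (0:ℝ) T,
        rlInt (1 - α j) (fun s => φ s j - ξ j) t = ∫ s in (0:ℝ)..t, f (φ s) s j) ∧
      MemLp (fun s => f (φ s) s j) (ENNReal.ofReal p) (volume.restrict (Icc (0:ℝ) T)) :=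
  integral_solution_solves_caputo_system_general n T hT α hα p hp f hf ξ φ hφ hsol
end

section
/- Let T > 0, ρ ∈ (0,1), q ∈ (1/ρ, ∞], and let g ∈ L^q(0,T;ℝ) with g(t) ≥ 0 for almost every t ∈ [0,T]. Define the iterated functions F₁(t) := J^ρ g(t) and F_{k+1}(t) := J^ρ (g · F_k)(t) = (1/Γ(ρ)) ∫₀ᵗ (t−s)^{ρ−1} g(s) F_k(s) ds for k ≥ 1. Then there exists n₀ ∈ ℕ such that F_{n₀}(t) < 1 for every t ∈ [0,T]. -/
/-!
Fix a finite exponent `r > 1/ρ` with `g ∈ L^r(0,T)`, its conjugate exponent `p`, and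
`σ = ρ - 1/r > 0`. By Hölder's inequality, a bound `0 ≤ F(s) ≤ c s^(kσ)` on `(0,t]` gives
`J^ρ(g F)(t) ≤ c Γ(ρ)⁻¹ ‖g‖_r B(kσp + 1, (ρ-1)p + 1)^(1/p) t^((k+1)σ)`, the Beta integral being
finite because `(ρ - 1)p > -1`. Iterating, `F_n ≤ C_n T^(nσ)` on `[0,T]`, and the ratio of
consecutive bounds is a constant times `B(nσp + 1, (ρ-1)p + 1)^(1/p) → 0`, so `C_n T^(nσ) → 0`.
-/

open MeasureTheory Real Set ENNReal

/-- The iterated Riemann–Liouville integrals: `iterJ ρ g 1 = J^ρ g` and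
`iterJ ρ g (k+1) = J^ρ (g · iterJ ρ g k)`. -/
noncomputable def iterJ (ρ : ℝ) (g : ℝ → ℝ) : ℕ → ℝ → ℝ
  | 0 => fun _ => 1
  | k + 1 => fun t => rlInt ρ (fun s => g s * iterJ ρ g k s) t

open Filter Topology

lemma exists_lt_memLp_ofReal {α E : Type*} [MeasurableSpace α] [NormedAddCommGroup E]
    {μ : Measure α} [IsFiniteMeasure μ] {f : α → E} {q : ℝ≥0∞} {a : ℝ} (hf : MemLp f q μ)
    (ha : ENNReal.ofReal a < q) : ∃ r : ℝ, a < r ∧ MemLp f (ENNReal.ofReal r) μ := by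
  rcases eq_or_ne q ∞ with rfl | hq
  · exact ⟨a + 1, lt_add_one a, hf.mono_exponent le_top⟩
  refine ⟨q.toReal, ?_, by rwa [ofReal_toReal hq]⟩
  rcases le_or_gt 0 a with ha0 | ha0
  · exact (ofReal_lt_iff_lt_toReal ha0 hq).1 ha
  · exact ha0.trans_le toReal_nonneg

lemma tendsto_zero_of_le_mul {u d : ℕ → ℝ} (hu : ∀ n, 0 ≤ u n)
    (hud : ∀ n, u (n + 1) ≤ d n * u n) (hd : Tendsto d atTop (𝓝 0)) :
    Tendsto u atTop (𝓝 0) := by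
  refine (summable_of_ratio_norm_eventually_le (r := 1 / 2) (by norm_num) ?_).tendsto_atTop_zero
  filter_upwards [hd.eventually (ge_mem_nhds (by norm_num : (0:ℝ) < 1 / 2))] with n hn
  rw [norm_of_nonneg (hu _), norm_of_nonneg (hu _)]
  exact (hud n).trans (mul_le_mul_of_nonneg_right hn (hu n))

/-- Euler's Beta function `B(a + 1, b + 1)`. -/
noncomputable def betaRpow (a b : ℝ) : ℝ := ∫ u in (0:ℝ)..1, u ^ a * (1 - u) ^ b

lemma betaRpow_nonneg (a b : ℝ) : 0 ≤ betaRpow a b :=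
  intervalIntegral.integral_nonneg zero_le_one fun _ hu =>
    mul_nonneg (rpow_nonneg hu.1 a) (rpow_nonneg (sub_nonneg.2 hu.2) b)

lemma intervalIntegrable_rpow_mul_sub_rpow {a b : ℝ} (ha : 0 ≤ a) (hb : -1 < b) (t : ℝ) :
    IntervalIntegrable (fun s => s ^ a * (t - s) ^ b) volume 0 t := by
  have hsub : IntervalIntegrable (fun s => (t - s) ^ b) volume 0 t := by
    simpa using
      ((intervalIntegral.intervalIntegrable_rpow' (a := 0) (b := t) hb).comp_sub_left t).symm
  exact hsub.continuousOn_mul (continuous_rpow_const ha).continuousOn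

lemma integral_rpow_mul_sub_rpow {a b t : ℝ} (ht : 0 < t) :
    ∫ s in (0:ℝ)..t, s ^ a * (t - s) ^ b = t ^ (a + b + 1) * betaRpow a b := by
  have hscale : ∀ u ∈ uIcc (0:ℝ) 1,
      (t * u) ^ a * (t - t * u) ^ b = t ^ (a + b) * (u ^ a * (1 - u) ^ b) := by
    intro u hu
    rw [uIcc_of_le zero_le_one] at hu
    rw [show t - t * u = t * (1 - u) by ring, mul_rpow ht.le hu.1,
      mul_rpow ht.le (sub_nonneg.2 hu.2), rpow_add ht]
    ring
  have h := intervalIntegral.integral_comp_mul_left (fun s => s ^ a * (t - s) ^ b)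
    (a := 0) (b := 1) ht.ne'
  rw [intervalIntegral.integral_congr hscale, intervalIntegral.integral_const_mul, mul_zero,
    mul_one, smul_eq_mul] at h
  rw [← mul_inv_cancel_left₀ ht.ne' (∫ s in (0:ℝ)..t, s ^ a * (t - s) ^ b), ← h, betaRpow,
    rpow_add_one ht.ne']
  ring

lemma tendsto_betaRpow_atTop {b : ℝ} (hb : -1 < b) :
    Tendsto (fun a => betaRpow a b) atTop (𝓝 0) := by
  have hint : IntegrableOn (fun u : ℝ => (1 - u) ^ b) (Ioo 0 1) := by
    have := ((intervalIntegral.intervalIntegrable_rpow' (a := 0) (b := 1) hb).comp_sub_left 1).symm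
    simp only [sub_zero, sub_self] at this
    exact (intervalIntegrable_iff_integrableOn_Ioo_of_le zero_le_one).1 this
  have hlim := tendsto_integral_filter_of_dominated_convergence (μ := volume.restrict (Ioo 0 1))
    (l := atTop) (F := fun (a u : ℝ) => u ^ a * (1 - u) ^ b) (f := fun _ => 0)
    (fun u => (1 - u) ^ b) (Eventually.of_forall fun a => by fun_prop) ?_ hint ?_
  · simpa [betaRpow, intervalIntegral.integral_of_le, integral_Ioc_eq_integral_Ioo] using hlim
  · filter_upwards [eventually_ge_atTop 0] with a ha
    filter_upwards [ae_restrict_mem measurableSet_Ioo] with u hu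
    rw [norm_of_nonneg (mul_nonneg (rpow_nonneg hu.1.le a) (rpow_nonneg (sub_pos.2 hu.2).le b))]
    exact mul_le_of_le_one_left (rpow_nonneg (sub_pos.2 hu.2).le b)
      (rpow_le_one hu.1.le hu.2.le ha)
  · filter_upwards [ae_restrict_mem measurableSet_Ioo] with u hu
    simpa using (tendsto_rpow_atTop_of_base_lt_one u (by linarith [hu.1]) hu.2).mul_const
      ((1 - u) ^ b)

lemma memLp_rpow_mul_sub_rpow {a b p t : ℝ} (ha : 0 ≤ a) (hp : 0 < p) (hb : -1 < b * p) :
    MemLp (fun s => s ^ a * (t - s) ^ b) (ENNReal.ofReal p) (volume.restrict (Ioc 0 t)) := by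
  rw [← integrable_norm_rpow_iff (by fun_prop) (by simpa using hp) ofReal_ne_top,
    toReal_ofReal hp.le]
  rcases le_or_gt t 0 with ht | ht
  · simp [Ioc_eq_empty_of_le ht]
  refine ((intervalIntegrable_iff_integrableOn_Ioc_of_le ht.le).1
    (intervalIntegrable_rpow_mul_sub_rpow (mul_nonneg ha hp.le) hb t)).congr ?_
  filter_upwards [ae_restrict_mem measurableSet_Ioc] with s hs
  rw [norm_of_nonneg (mul_nonneg (rpow_nonneg hs.1.le a) (rpow_nonneg (sub_nonneg.2 hs.2) b)),
    mul_rpow (rpow_nonneg hs.1.le a) (rpow_nonneg (sub_nonneg.2 hs.2) b),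
    ← rpow_mul hs.1.le, ← rpow_mul (sub_nonneg.2 hs.2)]

lemma setIntegral_rpow_mul_sub_rpow_mul_le {a b p r t : ℝ} {g : ℝ → ℝ} (ht : 0 ≤ t)
    (ha : 0 ≤ a) (hpr : p.HolderConjugate r) (hb : -1 < b * p)
    (hg : MemLp g (ENNReal.ofReal r) (volume.restrict (Ioc 0 t)))
    (hg0 : ∀ᵐ s ∂volume.restrict (Ioc 0 t), 0 ≤ g s) :
    ∫ s in Ioc 0 t, s ^ a * (t - s) ^ b * g s ≤
      t ^ (a + b + 1 / p) * betaRpow (a * p) (b * p) ^ (1 / p) *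
        (∫ s in Ioc 0 t, g s ^ r) ^ (1 / r) := by
  have hp := hpr.pos
  rcases ht.eq_or_lt with rfl | ht
  · simp only [Ioc_self, Measure.restrict_empty, integral_zero_measure]
    exact mul_nonneg (mul_nonneg (rpow_nonneg le_rfl _) (rpow_nonneg (betaRpow_nonneg _ _) _))
      (rpow_nonneg le_rfl _)
  have hψ0 : ∀ᵐ s ∂volume.restrict (Ioc 0 t), 0 ≤ s ^ a * (t - s) ^ b := by
    filter_upwards [ae_restrict_mem measurableSet_Ioc] with s hs
    exact mul_nonneg (rpow_nonneg hs.1.le a) (rpow_nonneg (sub_nonneg.2 hs.2) b)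
  have hψp : ∫ s in Ioc 0 t, (s ^ a * (t - s) ^ b) ^ p =
      t ^ (a * p + b * p + 1) * betaRpow (a * p) (b * p) := by
    rw [← integral_rpow_mul_sub_rpow ht, intervalIntegral.integral_of_le ht.le]
    refine setIntegral_congr_fun measurableSet_Ioc fun s hs => ?_
    rw [mul_rpow (rpow_nonneg hs.1.le a) (rpow_nonneg (sub_nonneg.2 hs.2) b),
      ← rpow_mul hs.1.le, ← rpow_mul (sub_nonneg.2 hs.2)]
  calc ∫ s in Ioc 0 t, s ^ a * (t - s) ^ b * g s
      ≤ (∫ s in Ioc 0 t, (s ^ a * (t - s) ^ b) ^ p) ^ (1 / p) *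
          (∫ s in Ioc 0 t, g s ^ r) ^ (1 / r) :=
        integral_mul_le_Lp_mul_Lq_of_nonneg hpr hψ0 hg0 (memLp_rpow_mul_sub_rpow ha hp hb) hg
    _ = t ^ (a + b + 1 / p) * betaRpow (a * p) (b * p) ^ (1 / p) *
        (∫ s in Ioc 0 t, g s ^ r) ^ (1 / r) := by
      rw [hψp, mul_rpow (rpow_nonneg ht.le _) (betaRpow_nonneg _ _), ← rpow_mul ht.le]
      congr 3
      field_simp

lemma Real.HolderConjugate.neg_one_lt_sub_one_mul {p r ρ : ℝ} (hpr : p.HolderConjugate r)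
    (hρr : 1 / r < ρ) : -1 < (ρ - 1) * p := by
  have : 0 < p * (ρ - 1 + 1 / p) := mul_pos hpr.pos (by linarith [hpr.one_div_add_one_div])
  rwa [mul_add, mul_one_div_cancel hpr.ne_zero, mul_comm, ← neg_lt_iff_pos_add] at this

lemma rlInt_eq_setIntegral {ρ t : ℝ} (h : ℝ → ℝ) (ht : 0 ≤ t) :
    rlInt ρ h t = (Gamma ρ)⁻¹ * ∫ s in Ioc 0 t, (t - s) ^ (ρ - 1) * h s := by
  simp only [rlInt, intervalIntegral.integral_of_le ht, smul_eq_mul]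

lemma rlInt_nonneg {ρ t : ℝ} {h : ℝ → ℝ} (hρ : 0 < ρ) (ht : 0 ≤ t)
    (h0 : ∀ᵐ s ∂volume.restrict (Ioc 0 t), 0 ≤ h s) : 0 ≤ rlInt ρ h t := by
  rw [rlInt_eq_setIntegral h ht]
  refine mul_nonneg (inv_nonneg.2 (Gamma_pos_of_pos hρ).le) (integral_nonneg_of_ae ?_)
  filter_upwards [h0, ae_restrict_mem measurableSet_Ioc] with s hs hs'
  exact mul_nonneg (rpow_nonneg (sub_nonneg.2 hs'.2) _) hs

lemma rlInt_mul_le {ρ a c p r t : ℝ} {g F : ℝ → ℝ} (hρ : 0 < ρ) (ht : 0 ≤ t) (ha : 0 ≤ a)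
    (hc : 0 ≤ c) (hpr : p.HolderConjugate r) (hρp : -1 < (ρ - 1) * p)
    (hg : MemLp g (ENNReal.ofReal r) (volume.restrict (Ioc 0 t)))
    (hg0 : ∀ᵐ s ∂volume.restrict (Ioc 0 t), 0 ≤ g s)
    (hF : ∀ s ∈ Ioc 0 t, 0 ≤ F s ∧ F s ≤ c * s ^ a) :
    rlInt ρ (fun s => g s * F s) t ≤ (Gamma ρ)⁻¹ * c *
      (t ^ (a + (ρ - 1) + 1 / p) * betaRpow (a * p) ((ρ - 1) * p) ^ (1 / p) *
        (∫ s in Ioc 0 t, g s ^ r) ^ (1 / r)) := by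
  have hmem : ∀ᵐ s ∂volume.restrict (Ioc 0 t), s ∈ Ioc 0 t := ae_restrict_mem measurableSet_Ioc
  have hint :
      Integrable (fun s => s ^ a * (t - s) ^ (ρ - 1) * g s) (volume.restrict (Ioc 0 t)) := by
    have := hpr.ennrealOfReal
    exact (memLp_rpow_mul_sub_rpow ha hpr.pos hρp).integrable_mul hg
  rw [rlInt_eq_setIntegral _ ht, mul_assoc]
  gcongr
  -- no measurability of `F` is needed: only the dominating function must be integrable
  calc ∫ s in Ioc 0 t, (t - s) ^ (ρ - 1) * (g s * F s)
      ≤ ∫ s in Ioc 0 t, c * (s ^ a * (t - s) ^ (ρ - 1) * g s) := by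
        refine integral_mono_of_nonneg ?_ (hint.const_mul c) ?_
        · filter_upwards [hg0, hmem] with s hgs hs
          exact mul_nonneg (rpow_nonneg (sub_nonneg.2 hs.2) _) (mul_nonneg hgs (hF s hs).1)
        · filter_upwards [hg0, hmem] with s hgs hs
          calc (t - s) ^ (ρ - 1) * (g s * F s) ≤ (t - s) ^ (ρ - 1) * (g s * (c * s ^ a)) := by
                gcongr
                · exact rpow_nonneg (sub_nonneg.2 hs.2) _
                · exact (hF s hs).2
            _ = c * (s ^ a * (t - s) ^ (ρ - 1) * g s) := by ring
    _ = c * ∫ s in Ioc 0 t, s ^ a * (t - s) ^ (ρ - 1) * g s := integral_const_mul c _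
    _ ≤ _ := by
      gcongr
      exact setIntegral_rpow_mul_sub_rpow_mul_le ht ha hpr hρp hg hg0

section Iteration

variable {T ρ p r : ℝ} {g : ℝ → ℝ}

noncomputable def iterJGain (T ρ p r : ℝ) (g : ℝ → ℝ) (k : ℕ) : ℝ :=
  (Gamma ρ)⁻¹ * betaRpow (k * (ρ - 1 / r) * p) ((ρ - 1) * p) ^ (1 / p) *
    (∫ s in Icc 0 T, g s ^ r) ^ (1 / r)

lemma iterJGain_nonneg (hρ : 0 < ρ) (hg0 : ∀ᵐ s ∂volume.restrict (Icc 0 T), 0 ≤ g s) (k : ℕ) :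
    0 ≤ iterJGain T ρ p r g k := by
  have := betaRpow_nonneg (k * (ρ - 1 / r) * p) ((ρ - 1) * p)
  have : 0 ≤ ∫ s in Icc 0 T, g s ^ r :=
    integral_nonneg_of_ae (hg0.mono fun s hs => rpow_nonneg hs r)
  unfold iterJGain
  positivity

lemma iterJ_le (hρ : 0 < ρ) (hpr : p.HolderConjugate r) (hρr : 1 / r < ρ)
    (hg : MemLp g (ENNReal.ofReal r) (volume.restrict (Icc 0 T)))
    (hg0 : ∀ᵐ s ∂volume.restrict (Icc 0 T), 0 ≤ g s) (n : ℕ) {t : ℝ} (ht : t ∈ Icc 0 T) :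
    0 ≤ iterJ ρ g n t ∧
      iterJ ρ g n t ≤ (∏ k ∈ Finset.range n, iterJGain T ρ p r g k) * t ^ (n * (ρ - 1 / r)) := by
  have hσ : ρ - 1 + 1 / p = ρ - 1 / r := by linarith [hpr.one_div_add_one_div]
  have hgr : IntegrableOn (fun s => g s ^ r) (Icc 0 T) := by
    refine (hg.integrable_norm_rpow (by simpa using hpr.symm.pos) ofReal_ne_top).congr ?_
    filter_upwards [hg0] with s hs
    rw [toReal_ofReal hpr.symm.nonneg, norm_of_nonneg hs]
  induction n generalizing t with
  | zero => simp [iterJ]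
  | succ n ih =>
    have hsub : Ioc 0 t ⊆ Icc 0 T := fun s hs => ⟨hs.1.le, hs.2.trans ht.2⟩
    have hg0' := ae_restrict_of_ae_restrict_of_subset hsub hg0
    have hnorm : (∫ s in Ioc 0 t, g s ^ r) ^ (1 / r) ≤ (∫ s in Icc 0 T, g s ^ r) ^ (1 / r) :=
      rpow_le_rpow (integral_nonneg_of_ae (hg0'.mono fun s hs => rpow_nonneg hs r))
        (setIntegral_mono_set hgr (hg0.mono fun s hs => rpow_nonneg hs r) hsub.eventuallyLE)
        (one_div_nonneg.2 hpr.symm.nonneg)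
    set P := ∏ k ∈ Finset.range n, iterJGain T ρ p r g k
    have hP : 0 ≤ P := Finset.prod_nonneg fun k _ => iterJGain_nonneg hρ hg0 k
    have := betaRpow_nonneg (n * (ρ - 1 / r) * p) ((ρ - 1) * p)
    refine ⟨rlInt_nonneg hρ ht.1 ?_, ?_⟩
    · filter_upwards [hg0', ae_restrict_mem measurableSet_Ioc] with s hgs hs
      exact mul_nonneg hgs (ih (hsub hs)).1
    calc iterJ ρ g (n + 1) t
        ≤ (Gamma ρ)⁻¹ * P * (t ^ (n * (ρ - 1 / r) + (ρ - 1) + 1 / p) *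
            betaRpow (n * (ρ - 1 / r) * p) ((ρ - 1) * p) ^ (1 / p) *
            (∫ s in Ioc 0 t, g s ^ r) ^ (1 / r)) :=
          rlInt_mul_le hρ ht.1 (mul_nonneg n.cast_nonneg (sub_pos.2 hρr).le) hP hpr
            (hpr.neg_one_lt_sub_one_mul hρr) (hg.mono_measure (Measure.restrict_mono hsub le_rfl))
            hg0' fun s hs => ih (hsub hs)
      _ ≤ (Gamma ρ)⁻¹ * P * (t ^ ((n + 1 : ℕ) * (ρ - 1 / r)) *
            betaRpow (n * (ρ - 1 / r) * p) ((ρ - 1) * p) ^ (1 / p) *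
            (∫ s in Icc 0 T, g s ^ r) ^ (1 / r)) := by
        rw [add_assoc, hσ, Nat.cast_succ, add_one_mul]
        have := ht.1
        gcongr
      _ = (∏ k ∈ Finset.range (n + 1), iterJGain T ρ p r g k) *
            t ^ ((n + 1 : ℕ) * (ρ - 1 / r)) := by
        rw [Finset.prod_range_succ, iterJGain]
        ring

lemma tendsto_iterJGain (hpr : p.HolderConjugate r) (hρr : 1 / r < ρ) :
    Tendsto (iterJGain T ρ p r g) atTop (𝓝 0) := by
  have hβ : Tendsto (fun k : ℕ => betaRpow (k * (ρ - 1 / r) * p) ((ρ - 1) * p)) atTop (𝓝 0) :=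
    (tendsto_betaRpow_atTop (hpr.neg_one_lt_sub_one_mul hρr)).comp
      ((tendsto_natCast_atTop_atTop.atTop_mul_const (sub_pos.2 hρr)).atTop_mul_const hpr.pos)
  have hcont : ContinuousAt (fun x : ℝ => (Gamma ρ)⁻¹ * x ^ (1 / p) *
      (∫ s in Icc 0 T, g s ^ r) ^ (1 / r)) 0 := by
    have := hpr.pos
    fun_prop (disch := positivity)
  have h := hcont.tendsto.comp hβ
  rwa [zero_rpow (one_div_pos.2 hpr.pos).ne', mul_zero, zero_mul] at h

end Iteration

/-- For `ρ ∈ (0,1)`, `q ∈ (1/ρ, ∞]` and `0 ≤ g ∈ L^q(0,T)`, some iterate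
`J^ρ(g J^ρ(g ⋯ J^ρ g))` is everywhere smaller than `1` on `[0,T]`. -/
theorem iterated_rlInt_lt_one
    (T : ℝ) (hT : 0 < T) (ρ : ℝ) (hρ : ρ ∈ Ioo (0:ℝ) 1)
    (q : ℝ≥0∞) (hq : ENNReal.ofReal (1 / ρ) < q)
    (g : ℝ → ℝ) (hg : MemLp g q (volume.restrict (Icc (0:ℝ) T)))
    (hg0 : ∀ᵐ t ∂(volume.restrict (Icc (0:ℝ) T)), 0 ≤ g t) :
    ∃ n₀ : ℕ, 1 ≤ n₀ ∧ ∀ t ∈ Icc (0:ℝ) T, iterJ ρ g n₀ t < 1 := by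
  obtain ⟨hρ0, hρ1⟩ := hρ
  obtain ⟨r, hρr, hgr⟩ := exists_lt_memLp_ofReal hg hq
  have hr : 1 < r := (one_lt_one_div hρ0 hρ1).trans hρr
  have hpr : r.conjExponent.HolderConjugate r := (Real.HolderConjugate.conjExponent hr).symm
  have hσ : 1 / r < ρ := (one_div_lt (by linarith) hρ0).2 hρr
  set P : ℕ → ℝ := fun n => ∏ k ∈ Finset.range n, iterJGain T ρ r.conjExponent r g k
  have hP : ∀ n, 0 ≤ P n := fun n => Finset.prod_nonneg fun k _ => iterJGain_nonneg hρ0 hg0 k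
  have hPT : Tendsto (fun n : ℕ => P n * T ^ (n * (ρ - 1 / r))) atTop (𝓝 0) := by
    have hgain := (tendsto_iterJGain (T := T) (g := g) hpr hσ).mul_const (T ^ (ρ - 1 / r))
    rw [zero_mul] at hgain
    refine tendsto_zero_of_le_mul (fun n => mul_nonneg (hP n) (rpow_nonneg hT.le _))
      (fun n => le_of_eq ?_) hgain
    simp only [P, Finset.prod_range_succ, Nat.cast_succ, add_one_mul, rpow_add hT]
    ring
  obtain ⟨n, hn1, hn⟩ := ((hPT.eventually (gt_mem_nhds one_pos)).and (eventually_ge_atTop 1)).exists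
  refine ⟨n, hn, fun t ht => ?_⟩
  calc iterJ ρ g n t ≤ P n * t ^ (n * (ρ - 1 / r)) := (iterJ_le hρ0 hpr hσ hgr hg0 n ht).2
    _ ≤ P n * T ^ (n * (ρ - 1 / r)) := mul_le_mul_of_nonneg_left
      (rpow_le_rpow ht.1 ht.2 (mul_nonneg n.cast_nonneg (sub_pos.2 hσ).le)) (hP n)
    _ < 1 := hn1
end

section
/- Let β ∈ (0,1) and n ∈ ℕ with n ≥ 1. Then n Γ(nβ) / ((n+1) Γ((n+1)β)) ≤ ((n+1)β)^{−β}. In particular, n Γ(nβ) / ((n+1) Γ((n+1)β)) → 0 as n → ∞. -/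
open Real Filter

lemma gamma_key (x β : ℝ) (hx : 0 < x) (hb0 : 0 < β) (hb1 : β < 1) :
    x * Real.Gamma x ≤ Real.Gamma (x + β) * (x + β) ^ (1 - β) := by
  have hxb : 0 < x + β := by linarith
  have hG1 : 0 < Real.Gamma (x + β) := Real.Gamma_pos_of_pos hxb
  have hG2 : 0 < Real.Gamma (x + β + 1) := Real.Gamma_pos_of_pos (by linarith)
  have hconv := Real.convexOn_log_Gamma.2 (Set.mem_Ioi.mpr hxb)
    (Set.mem_Ioi.mpr (show (0:ℝ) < x + β + 1 by linarith)) (le_of_lt hb0)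
    (by linarith : (0:ℝ) ≤ 1 - β) (by ring)
  have harg : β • (x + β) + (1 - β) • (x + β + 1) = x + 1 := by
    simp only [smul_eq_mul]; ring
  rw [harg] at hconv
  simp only [Function.comp_apply, smul_eq_mul] at hconv
  have hGx1 : 0 < Real.Gamma (x + 1) := Real.Gamma_pos_of_pos (by linarith)
  have hle : Real.Gamma (x + 1) ≤
      Real.Gamma (x + β) ^ β * Real.Gamma (x + β + 1) ^ (1 - β) := by
    have hrhs : Real.log (Real.Gamma (x + β) ^ β * Real.Gamma (x + β + 1) ^ (1 - β))
        = β * Real.log (Real.Gamma (x + β)) + (1 - β) * Real.log (Real.Gamma (x + β + 1)) := by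
      rw [Real.log_mul (by positivity) (by positivity), Real.log_rpow hG1, Real.log_rpow hG2]
    have := Real.exp_le_exp.mpr (le_trans hconv (le_of_eq hrhs.symm))
    rwa [Real.exp_log hGx1, Real.exp_log (by positivity)] at this
  rw [← Real.Gamma_add_one (ne_of_gt hx)]
  calc Real.Gamma (x + 1) ≤ Real.Gamma (x + β) ^ β * Real.Gamma (x + β + 1) ^ (1 - β) := hle
    _ = Real.Gamma (x + β) * (x + β) ^ (1 - β) := by
        rw [Real.Gamma_add_one (ne_of_gt hxb), Real.mul_rpow hxb.le hG1.le,
          show Real.Gamma (x+β) ^ β * ((x+β) ^ (1-β) * Real.Gamma (x+β) ^ (1-β))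
            = (Real.Gamma (x+β) ^ β * Real.Gamma (x+β) ^ (1-β)) * (x+β) ^ (1-β) by ring,
          ← Real.rpow_add hG1, show β + (1 - β) = 1 by ring, Real.rpow_one]

/-- For `β ∈ (0,1)` and `n ≥ 1`, `n Γ(nβ) / ((n+1) Γ((n+1)β)) ≤ ((n+1)β)^(-β)`;
in particular this quotient tends to `0` as `n → ∞`. -/
theorem gamma_ratio_le_and_tendsto_zero (β : ℝ) (hβ : β ∈ Set.Ioo (0:ℝ) 1) :
    (∀ n : ℕ, 1 ≤ n →
      (n : ℝ) * Real.Gamma ((n : ℝ) * β) / (((n : ℝ) + 1) * Real.Gamma (((n : ℝ) + 1) * β)) ≤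
        (((n : ℝ) + 1) * β) ^ (-β)) ∧
    Tendsto (fun n : ℕ =>
        (n : ℝ) * Real.Gamma ((n : ℝ) * β) / (((n : ℝ) + 1) * Real.Gamma (((n : ℝ) + 1) * β)))
      atTop (nhds 0) := by
  obtain ⟨hb0, hb1⟩ := hβ
  have key : ∀ n : ℕ, 1 ≤ n →
      (n : ℝ) * Real.Gamma ((n : ℝ) * β) / (((n : ℝ) + 1) * Real.Gamma (((n : ℝ) + 1) * β)) ≤
        (((n : ℝ) + 1) * β) ^ (-β) := by
    intro n hn
    have hn1 : (1:ℝ) ≤ (n:ℝ) := by exact_mod_cast hn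
    have hx : 0 < (n:ℝ) * β := by positivity
    have hxb : (n:ℝ) * β + β = ((n:ℝ) + 1) * β := by ring
    have hxbpos : 0 < ((n:ℝ) + 1) * β := by positivity
    have hG : 0 < Real.Gamma (((n:ℝ) + 1) * β) := Real.Gamma_pos_of_pos hxbpos
    have h := gamma_key ((n:ℝ) * β) β hx hb0 hb1
    rw [hxb] at h
    rw [div_le_iff₀ (by positivity)]
    -- goal: n * Γ(nβ) ≤ ((n+1)β)^(-β) * ((n+1) * Γ((n+1)β))
    have hpow : (((n:ℝ) + 1) * β) ^ (-β) * (((n:ℝ) + 1) * β)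
        = (((n:ℝ) + 1) * β) ^ (1 - β) := by
      nth_rewrite 2 [show (((n:ℝ)+1)*β) = (((n:ℝ)+1)*β) ^ (1:ℝ) from (Real.rpow_one _).symm]
      rw [← Real.rpow_add hxbpos]; ring_nf
    have h2 : (n:ℝ) * β * Real.Gamma ((n:ℝ) * β)
        ≤ Real.Gamma (((n:ℝ) + 1) * β) * ((((n:ℝ) + 1) * β) ^ (-β) * (((n:ℝ) + 1) * β)) := by
      rw [hpow]; exact h
    have hβne : (0:ℝ) < β := hb0
    nlinarith [h2, mul_pos hxbpos hG]
  refine ⟨key, ?_⟩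
  have hbound : Tendsto (fun n : ℕ => (((n : ℝ) + 1) * β) ^ (-β)) atTop (nhds 0) := by
    apply (tendsto_rpow_neg_atTop hb0).comp
    apply Tendsto.atTop_mul_const hb0
    exact tendsto_atTop_add_const_right _ 1 tendsto_natCast_atTop_atTop
  apply squeeze_zero' ?_ (eventually_atTop.mpr ⟨1, key⟩) hbound
  filter_upwards [eventually_atTop.mpr ⟨1, fun n (hn : 1 ≤ n) => hn⟩] with n hn
  have hn1 : (1:ℝ) ≤ (n:ℝ) := by exact_mod_cast hn
  have hx : 0 < (n:ℝ) * β := by positivity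
  have : 0 < ((n:ℝ) + 1) * β := by positivity
  positivity
end

section
/- For all real numbers x > 0 and 0 < a ≤ 1, one has (x/(x+a))^{1−a} ≤ Γ(x+a)/(x^a Γ(x)) ≤ 1; equivalently, 1/x^a ≤ Γ(x)/Γ(x+a) ≤ (x+a)^{1−a}/x. -/
open Real

lemma wendel_aux (y c : ℝ) (hy : 0 < y) (hc : 0 < c) (hc1 : c ≤ 1) :
    Real.Gamma (y + c) ≤ y ^ c * Real.Gamma y := by
  rcases eq_or_lt_of_le hc1 with h1 | h1
  · rw [h1, Real.rpow_one, Real.Gamma_add_one (ne_of_gt hy)]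
  · have key := Real.Gamma_mul_add_mul_le_rpow_Gamma_mul_rpow_Gamma hy
      (by linarith : (0:ℝ) < y + 1) (by linarith : 0 < 1 - c) hc (by ring)
    have e1 : (1 - c) * y + c * (y + 1) = y + c := by ring
    rw [e1, Real.Gamma_add_one (ne_of_gt hy)] at key
    have hG : 0 < Real.Gamma y := Real.Gamma_pos_of_pos hy
    calc Real.Gamma (y + c) ≤ Real.Gamma y ^ (1 - c) * (y * Real.Gamma y) ^ c := key
      _ = y ^ c * Real.Gamma y := by
          rw [Real.mul_rpow hy.le hG.le, ← mul_assoc,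
            mul_comm (Real.Gamma y ^ (1 - c)), mul_assoc,
            ← Real.rpow_add hG, sub_add_cancel, Real.rpow_one]

/-- Wendel's inequality: for `x > 0` and `0 < a ≤ 1`,
`(x/(x+a))^(1-a) ≤ Γ(x+a)/(x^a Γ(x)) ≤ 1`; equivalently
`1/x^a ≤ Γ(x)/Γ(x+a) ≤ (x+a)^(1-a)/x`. -/
theorem wendel_gamma_ratio_inequality (x a : ℝ) (hx : 0 < x) (ha : 0 < a) (ha1 : a ≤ 1) :
    ((x / (x + a)) ^ (1 - a) ≤ Real.Gamma (x + a) / (x ^ a * Real.Gamma x) ∧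
      Real.Gamma (x + a) / (x ^ a * Real.Gamma x) ≤ 1) ∧
    (1 / x ^ a ≤ Real.Gamma x / Real.Gamma (x + a) ∧
      Real.Gamma x / Real.Gamma (x + a) ≤ (x + a) ^ (1 - a) / x) := by
  have hxa : 0 < x + a := by linarith
  have hG : 0 < Real.Gamma x := Real.Gamma_pos_of_pos hx
  have hGa : 0 < Real.Gamma (x + a) := Real.Gamma_pos_of_pos hxa
  have hxa' : (0:ℝ) < x ^ a := Real.rpow_pos_of_pos hx a
  have hp : (0:ℝ) < (x + a) ^ (1 - a) := Real.rpow_pos_of_pos hxa _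
  have h1 : Real.Gamma (x + a) ≤ x ^ a * Real.Gamma x := wendel_aux x a hx ha ha1
  have h2 : x * Real.Gamma x ≤ (x + a) ^ (1 - a) * Real.Gamma (x + a) := by
    rcases eq_or_lt_of_le ha1 with h | h
    · subst h
      rw [sub_self, Real.rpow_zero, one_mul, ← Real.Gamma_add_one (ne_of_gt hx)]
    · have := wendel_aux (x + a) (1 - a) hxa (by linarith) (by linarith)
      have e1 : x + a + (1 - a) = x + 1 := by ring
      rw [e1, Real.Gamma_add_one (ne_of_gt hx)] at this
      exact this
  have hxx : x ^ (1 - a) * (x ^ a * Real.Gamma x) = x * Real.Gamma x := by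
    rw [← mul_assoc, ← Real.rpow_add hx, sub_add_cancel, Real.rpow_one]
  refine ⟨⟨?_, ?_⟩, ?_, ?_⟩
  · rw [Real.div_rpow hx.le hxa.le, div_le_div_iff₀ hp (by positivity), hxx]
    calc x * Real.Gamma x ≤ (x + a) ^ (1 - a) * Real.Gamma (x + a) := h2
      _ = Real.Gamma (x + a) * (x + a) ^ (1 - a) := mul_comm _ _
  · rw [div_le_one (by positivity)]; exact h1
  · rw [div_le_div_iff₀ hxa' hGa, one_mul]; linarith [h1]
  · rw [div_le_div_iff₀ hGa hx]; linarith [h2]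
end

section
/- Let n ≥ 1, T > 0, α₁, …, αₙ ∈ (0,1], p > max{1/α_j : j ∈ {1,…,n}}, let f = (f₁,…,fₙ) : ℝⁿ × [0,T] → ℝⁿ be an L^p-Carathéodory function with Lipschitz function ℓ ∈ L^p(0,T), and ξ ∈ ℝⁿ. Set α₀ := min{α_j : j ∈ {1,…,n}} and M := Σ_{j=1}^n T^{α_j − α₀} Γ(α₀)/Γ(α_j), and define T(φ)(t) := ξ + (J^{α_1} f₁(φ(·),·)(t), …, J^{α_n} f_n(φ(·),·)(t)) on C([0,T];ℝⁿ). Then for all continuous φ, ψ : [0,T] → ℝⁿ and all t ∈ [0,T], ‖T(φ)(t) − T(ψ)(t)‖_{ℝⁿ} ≤ J^{α₀}[ M ℓ(·) ‖φ(·) − ψ(·)‖_{ℝⁿ} ](t) = (M/Γ(α₀)) ∫₀ᵗ (t−s)^{α₀−1} ℓ(s) ‖φ(s) − ψ(s)‖_{ℝⁿ} ds. -/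
open MeasureTheory Real Set

/-- The operator `𝒯(φ)(t) = ξ + (J^{α_1} f₁(φ(·),·)(t), …, J^{α_n} f_n(φ(·),·)(t))`
associated to the fractional system. -/
noncomputable def caraOp {n : ℕ} (α : Fin n → ℝ)
    (f : EuclideanSpace ℝ (Fin n) → ℝ → EuclideanSpace ℝ (Fin n))
    (ξ : EuclideanSpace ℝ (Fin n)) (φ : ℝ → EuclideanSpace ℝ (Fin n)) :
    ℝ → EuclideanSpace ℝ (Fin n) :=
  fun t => ξ + (show EuclideanSpace ℝ (Fin n) from WithLp.toLp 2 (fun j => rlInt (α j) (fun s => f (φ s) s j) t))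

/-!
Componentwise, the Lipschitz bound on `f` bounds the difference of the two Riemann–Liouville
integrals of order `α_j` by `J^{α_j}[ℓ ‖φ - ψ‖](t)`. For `0 < t - s ≤ T` the kernel satisfies
`(t - s)^(α_j - 1) ≤ T^(α_j - α₀) (t - s)^(α₀ - 1)`, which turns this into
`T^(α_j - α₀) Γ(α₀) / Γ(α_j) · J^{α₀}[ℓ ‖φ - ψ‖](t)`, and `‖x‖ ≤ Σ_j |x_j|` sums these to `M`.
-/

theorem EuclideanSpace.norm_le_sum_norm {𝕜 ι : Type*} [RCLike 𝕜] [Fintype ι]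
    (x : EuclideanSpace 𝕜 ι) : ‖x‖ ≤ ∑ i, ‖x i‖ := by
  conv_lhs => rw [← (EuclideanSpace.basisFun ι 𝕜).sum_repr x]
  refine (norm_sum_le _ _).trans_eq ?_
  simp [norm_smul]

/-- Off a null set of times `f` is continuous in space and measurable in time, hence jointly
measurable. -/
theorem aemeasurable_comp_of_caratheodory {X E : Type*} [TopologicalSpace X]
    [TopologicalSpace.MetrizableSpace X] [SecondCountableTopology X] [MeasurableSpace X]
    [OpensMeasurableSpace X]
    [NormedAddCommGroup E] [MeasurableSpace E] [BorelSpace E] {μ : Measure ℝ} {f : X → ℝ → E}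
    (hcont : ∀ᵐ t ∂μ, Continuous fun x => f x t) (hmeas : ∀ x, Measurable (f x))
    {φ : ℝ → X} (hφ : AEMeasurable φ μ) : AEMeasurable (fun s => f (φ s) s) μ := by
  obtain ⟨B, hBsub, hBmeas, hB0⟩ := exists_measurable_superset_of_null (ae_iff.mp hcont)
  classical
  set f' : X → ℝ → E := fun x t => if t ∈ B then 0 else f x t
  have hcont' : ∀ t, Continuous fun x => f' x t := by
    intro t
    by_cases ht : t ∈ B
    · simpa [f', ht] using continuous_const
    · simpa [f', ht] using not_not.mp fun h => ht (hBsub h)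
  have hf' : Measurable (Function.uncurry f') :=
    measurable_uncurry_of_continuous_of_measurable hcont'
      fun x => Measurable.ite hBmeas measurable_const (hmeas x)
  have hB : ∀ᵐ s ∂μ, s ∉ B := measure_eq_zero_iff_ae_notMem.mp hB0
  refine (hf'.comp_aemeasurable (hφ.prodMk aemeasurable_id)).congr ?_
  filter_upwards [hB] with s hs
  simp [f', hs]

theorem memLp_sub_rpow {t r q : ℝ} (hq : 0 < q) (hrq : -1 < r * q) :
    MemLp (fun s => (t - s) ^ r) (ENNReal.ofReal q) (volume.restrict (Ioc 0 t)) := by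
  have hq₀ : ENNReal.ofReal q ≠ 0 := by simpa using hq
  have hmeas : Measurable fun s : ℝ => (t - s) ^ r := by fun_prop
  refine (memLp_norm_rpow_iff hmeas.aestronglyMeasurable hq₀ ENNReal.ofReal_ne_top).mp ?_
  rw [ENNReal.div_self hq₀ ENNReal.ofReal_ne_top, memLp_one_iff_integrable,
    ENNReal.toReal_ofReal hq.le]
  have hint : IntegrableOn (fun s => (t - s) ^ (r * q)) (Ioc 0 t) := by
    rcases le_or_gt 0 t with ht | ht
    · have := (intervalIntegral.intervalIntegrable_rpow' hrq (a := 0) (b := t)).comp_sub_left t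
      simp only [sub_zero, sub_self] at this
      exact (intervalIntegrable_iff_integrableOn_Ioc_of_le ht).mp this.symm
    · simp [Ioc_eq_empty_of_le ht.le]
  refine hint.congr_fun (fun s hs => ?_) measurableSet_Ioc
  have hts : 0 ≤ t - s := sub_nonneg.mpr hs.2
  rw [Real.norm_eq_abs, abs_of_nonneg (Real.rpow_nonneg hts r), ← Real.rpow_mul hts]

/-- Hölder's inequality against the conjugate exponent: the kernel `(t - s) ^ (β - 1)` lies in
`L^q(0, t)` exactly when `(β - 1) q > -1`, i.e. when `β > 1 / p`. -/
theorem intervalIntegrable_rpow_sub_smul_of_memLp {E : Type*} [NormedAddCommGroup E]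
    [NormedSpace ℝ E] {β p t : ℝ} (ht : 0 ≤ t) (hp : 1 < p) (hpβ : p⁻¹ < β) {g : ℝ → E}
    (hg : MemLp g (ENNReal.ofReal p) (volume.restrict (Ioc 0 t))) :
    IntervalIntegrable (fun s => (t - s) ^ (β - 1) • g s) volume 0 t := by
  set q := p.conjExponent
  have hpq : p.HolderConjugate q := .conjExponent hp
  have hq : 0 < q := hpq.symm.pos
  have hrq : -1 < (β - 1) * q := by
    calc (-1 : ℝ) = (p⁻¹ - 1) * q := by rw [hpq.inv_sub_one, neg_mul, inv_mul_cancel₀ hq.ne']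
      _ < (β - 1) * q := by gcongr
  have : ENNReal.HolderTriple (ENNReal.ofReal q) (ENNReal.ofReal p) 1 :=
    hpq.symm.ennrealOfReal
  rw [intervalIntegrable_iff_integrableOn_Ioc_of_le ht, IntegrableOn,
    ← memLp_one_iff_integrable]
  exact hg.smul (memLp_sub_rpow hq hrq)

theorem rlInt_const_mul (α c : ℝ) (g : ℝ → ℝ) (t : ℝ) :
    rlInt α (fun s => c * g s) t = c * rlInt α g t := by
  simp only [rlInt, smul_eq_mul, mul_left_comm _ c, intervalIntegral.integral_const_mul]

theorem rpow_sub_one_le_rpow_mul_rpow_sub_one {x T α β : ℝ} (hx : 0 < x) (hxT : x ≤ T)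
    (hβα : β ≤ α) : x ^ (α - 1) ≤ T ^ (α - β) * x ^ (β - 1) := by
  calc x ^ (α - 1) = x ^ (α - β) * x ^ (β - 1) := by rw [← Real.rpow_add hx]; ring_nf
    _ ≤ T ^ (α - β) * x ^ (β - 1) := by gcongr

theorem norm_rlInt_sub_le {E : Type*} [NormedAddCommGroup E] [NormedSpace ℝ E]
    {α β p t T : ℝ} (ht : 0 ≤ t) (htT : t ≤ T) (hp : 1 < p) (hpβ : p⁻¹ < β) (hβα : β ≤ α)
    {u v : ℝ → E} {L : ℝ → ℝ} (hu : MemLp u (ENNReal.ofReal p) (volume.restrict (Ioc 0 t)))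
    (hv : MemLp v (ENNReal.ofReal p) (volume.restrict (Ioc 0 t)))
    (hL : MemLp L (ENNReal.ofReal p) (volume.restrict (Ioc 0 t)))
    (huv : ∀ᵐ s ∂(volume.restrict (Ioc 0 t)), ‖u s - v s‖ ≤ L s) :
    ‖rlInt α u t - rlInt α v t‖ ≤ T ^ (α - β) * Gamma β / Gamma α * rlInt β L t := by
  have hpα : p⁻¹ < α := hpβ.trans_le hβα
  have hΓβ : 0 < Gamma β := Gamma_pos_of_pos ((inv_pos.mpr (by linarith)).trans hpβ)
  have hΓα : 0 < Gamma α := Gamma_pos_of_pos ((inv_pos.mpr (by linarith)).trans hpα)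
  have hbound : ‖∫ s in 0..t, (t - s) ^ (α - 1) • (u s - v s)‖ ≤
      ∫ s in 0..t, T ^ (α - β) * ((t - s) ^ (β - 1) * L s) := by
    refine intervalIntegral.norm_integral_le_of_norm_le ht ?_
      ((intervalIntegrable_rpow_sub_smul_of_memLp ht hp hpβ hL).const_mul _)
    rw [← ae_restrict_iff' measurableSet_Ioc]
    filter_upwards [huv, ae_restrict_of_ae (Measure.ae_ne volume t),
      ae_restrict_mem measurableSet_Ioc] with s hs hst hmem
    have hts : 0 < t - s := sub_pos.mpr (lt_of_le_of_ne hmem.2 hst)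
    rw [norm_smul, Real.norm_of_nonneg (rpow_nonneg hts.le _), ← mul_assoc]
    exact mul_le_mul (rpow_sub_one_le_rpow_mul_rpow_sub_one hts (by linarith [hmem.1]) hβα) hs
      (norm_nonneg _)
      (mul_nonneg (rpow_nonneg (ht.trans htT) _) (rpow_nonneg hts.le _))
  rw [rlInt, rlInt, ← smul_sub, ← intervalIntegral.integral_sub
    (intervalIntegrable_rpow_sub_smul_of_memLp ht hp hpα hu)
    (intervalIntegrable_rpow_sub_smul_of_memLp ht hp hpα hv)]
  simp_rw [← smul_sub]
  calc ‖(Gamma α)⁻¹ • ∫ s in 0..t, (t - s) ^ (α - 1) • (u s - v s)‖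
      = (Gamma α)⁻¹ * ‖∫ s in 0..t, (t - s) ^ (α - 1) • (u s - v s)‖ := by
        rw [norm_smul, norm_inv, Real.norm_of_nonneg hΓα.le]
    _ ≤ (Gamma α)⁻¹ * ∫ s in 0..t, T ^ (α - β) * ((t - s) ^ (β - 1) * L s) := by gcongr
    _ = T ^ (α - β) * Gamma β / Gamma α * rlInt β L t := by
        simp only [rlInt, smul_eq_mul, intervalIntegral.integral_const_mul]
        field_simp

theorem caraOp_sub_apply {n : ℕ} (α : Fin n → ℝ)
    (f : EuclideanSpace ℝ (Fin n) → ℝ → EuclideanSpace ℝ (Fin n))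
    (ξ : EuclideanSpace ℝ (Fin n)) (φ ψ : ℝ → EuclideanSpace ℝ (Fin n)) (t : ℝ) (j : Fin n) :
    (caraOp α f ξ φ t - caraOp α f ξ ψ t) j =
      rlInt (α j) (fun s => f (φ s) s j) t - rlInt (α j) (fun s => f (ψ s) s j) t := by
  simp [caraOp]

theorem memLp_comp_of_isCaratheodory {n : ℕ} {p T C : ℝ}
    {f : EuclideanSpace ℝ (Fin n) → ℝ → EuclideanSpace ℝ (Fin n)} {γ : ℝ → ℝ}
    (hcar : IsCaratheodory T f) (hC : 0 ≤ C)
    (hγ : MemLp γ (ENNReal.ofReal p) (volume.restrict (Icc 0 T)))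
    (hfγ : ∀ᵐ t ∂(volume.restrict (Icc (0:ℝ) T)), ∀ x, ‖f x t‖ ≤ C * ‖x‖ + γ t)
    {φ : ℝ → EuclideanSpace ℝ (Fin n)} (hφ : ContinuousOn φ (Icc 0 T)) :
    MemLp (fun s => f (φ s) s) (ENNReal.ofReal p) (volume.restrict (Icc 0 T)) := by
  obtain ⟨K, hK⟩ := isCompact_Icc.exists_bound_of_continuousOn hφ
  have hmeas := aemeasurable_comp_of_caratheodory hcar.1 hcar.2
    (hφ.aestronglyMeasurable measurableSet_Icc).aemeasurable
  refine ((memLp_const (C * K)).add hγ).mono' hmeas.aestronglyMeasurable ?_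
  filter_upwards [hfγ, ae_restrict_mem measurableSet_Icc] with s hs hmem
  exact (hs (φ s)).trans (by simp only [Pi.add_apply]; gcongr; exact hK s hmem)

theorem caraOp_contraction_estimate_general
    (n : ℕ) (hn : 1 ≤ n) (T : ℝ)
    (α : Fin n → ℝ) (hα : ∀ j, α j ∈ Ioc (0:ℝ) 1)
    (p : ℝ) (hp : ∀ j, 1 / α j < p)
    (f : EuclideanSpace ℝ (Fin n) → ℝ → EuclideanSpace ℝ (Fin n))
    (hcar : IsCaratheodory T f)
    (hgrowth : ∃ C > (0:ℝ), ∃ γ : ℝ → ℝ,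
      MemLp γ (ENNReal.ofReal p) (volume.restrict (Icc (0:ℝ) T)) ∧
      ∀ᵐ t ∂(volume.restrict (Icc (0:ℝ) T)), ∀ x, ‖f x t‖ ≤ C * ‖x‖ + γ t)
    (ℓ : ℝ → ℝ) (hℓ : MemLp ℓ (ENNReal.ofReal p) (volume.restrict (Icc (0:ℝ) T)))
    (hlip : ∀ᵐ t ∂(volume.restrict (Icc (0:ℝ) T)), ∀ x y, ‖f x t - f y t‖ ≤ ℓ t * ‖x - y‖)
    (ξ : EuclideanSpace ℝ (Fin n))
    (α₀ M : ℝ) (hα₀ : α₀ = ⨅ j, α j)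
    (hM : M = ∑ j, T ^ (α j - α₀) * Real.Gamma α₀ / Real.Gamma (α j)) :
    ∀ φ ψ : ℝ → EuclideanSpace ℝ (Fin n),
      ContinuousOn φ (Icc 0 T) → ContinuousOn ψ (Icc 0 T) →
      ∀ t ∈ Icc (0:ℝ) T,
        ‖caraOp α f ξ φ t - caraOp α f ξ ψ t‖ ≤
          rlInt α₀ (fun s => M * ℓ s * ‖φ s - ψ s‖) t := by
  intro φ ψ hφ hψ t ⟨ht, htT⟩
  have : Nonempty (Fin n) := ⟨⟨0, hn⟩⟩
  obtain ⟨j₀, hj₀⟩ := exists_eq_ciInf_of_finite (f := α)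
  have hα₀le : ∀ j, α₀ ≤ α j := fun j => hα₀ ▸ ciInf_le (Finite.bddBelow_range α) j
  have hp1 : 1 < p := (one_le_one_div (hα j₀).1 (hα j₀).2).trans_lt (hp j₀)
  have hpα₀ : p⁻¹ < α₀ := hα₀ ▸ hj₀ ▸ inv_lt_of_inv_lt₀ (hα j₀).1 (one_div (α j₀) ▸ hp j₀)
  obtain ⟨C, hC, γ, hγ, hfγ⟩ := hgrowth
  have hle : volume.restrict (Ioc 0 t) ≤ volume.restrict (Icc 0 T) :=
    Measure.restrict_mono (Ioc_subset_Icc_self.trans (Icc_subset_Icc_right htT)) le_rfl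
  have hcomp : ∀ χ, ContinuousOn χ (Icc 0 T) → ∀ j,
      MemLp (fun s => f (χ s) s j) (ENNReal.ofReal p) (volume.restrict (Ioc 0 t)) := fun χ hχ j =>
    (((EuclideanSpace.proj (𝕜 := ℝ) j).comp_memLp'
      (memLp_comp_of_isCaratheodory hcar hC.le hγ hfγ hχ)).mono_measure hle :)
  obtain ⟨K, hK⟩ := isCompact_Icc.exists_bound_of_continuousOn (hφ.sub hψ).norm
  have hL : MemLp (fun s => ℓ s * ‖φ s - ψ s‖) (ENNReal.ofReal p) (volume.restrict (Icc 0 T)) :=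
    (memLp_top_of_bound ((hφ.sub hψ).norm.aestronglyMeasurable measurableSet_Icc) K
      ((ae_restrict_mem measurableSet_Icc).mono hK)).smul hℓ
  have hj : ∀ j, ‖(caraOp α f ξ φ t - caraOp α f ξ ψ t) j‖ ≤
      T ^ (α j - α₀) * Gamma α₀ / Gamma (α j) * rlInt α₀ (fun s => ℓ s * ‖φ s - ψ s‖) t := by
    intro j
    rw [caraOp_sub_apply]
    refine norm_rlInt_sub_le ht htT hp1 hpα₀ (hα₀le j) (hcomp φ hφ j) (hcomp ψ hψ j)
      (hL.mono_measure hle) ?_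
    filter_upwards [hlip.filter_mono (ae_mono hle)] with s hs
    exact (PiLp.norm_apply_le (f (φ s) s - f (ψ s) s) j).trans (hs _ _)
  calc ‖caraOp α f ξ φ t - caraOp α f ξ ψ t‖
      ≤ ∑ j, ‖(caraOp α f ξ φ t - caraOp α f ξ ψ t) j‖ := EuclideanSpace.norm_le_sum_norm _
    _ ≤ ∑ j, T ^ (α j - α₀) * Gamma α₀ / Gamma (α j) *
          rlInt α₀ (fun s => ℓ s * ‖φ s - ψ s‖) t := Finset.sum_le_sum fun j _ => hj j
    _ = rlInt α₀ (fun s => M * ℓ s * ‖φ s - ψ s‖) t := by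
      simp_rw [mul_assoc M, rlInt_const_mul, hM, Finset.sum_mul]

/-- With `α₀ = min α_j` and `M = Σ_j T^(α_j-α₀) Γ(α₀)/Γ(α_j)`, the operator `𝒯` satisfies
`‖𝒯(φ)(t) - 𝒯(ψ)(t)‖ ≤ J^{α₀}[M ℓ(·) ‖φ(·)-ψ(·)‖](t)` for continuous `φ, ψ` and `t ∈ [0,T]`,
where `ℓ` is the Lipschitz function of the `L^p`-Carathéodory function `f`. -/
theorem caraOp_contraction_estimate
    (n : ℕ) (hn : 1 ≤ n) (T : ℝ) (hT : 0 < T)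
    (α : Fin n → ℝ) (hα : ∀ j, α j ∈ Ioc (0:ℝ) 1)
    (p : ℝ) (hp : ∀ j, 1 / α j < p)
    (f : EuclideanSpace ℝ (Fin n) → ℝ → EuclideanSpace ℝ (Fin n))
    (hcar : IsCaratheodory T f)
    (hgrowth : ∃ C > (0:ℝ), ∃ γ : ℝ → ℝ,
      MemLp γ (ENNReal.ofReal p) (volume.restrict (Icc (0:ℝ) T)) ∧
      ∀ᵐ t ∂(volume.restrict (Icc (0:ℝ) T)), ∀ x, ‖f x t‖ ≤ C * ‖x‖ + γ t)
    (ℓ : ℝ → ℝ) (hℓ : MemLp ℓ (ENNReal.ofReal p) (volume.restrict (Icc (0:ℝ) T)))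
    (hlip : ∀ᵐ t ∂(volume.restrict (Icc (0:ℝ) T)), ∀ x y, ‖f x t - f y t‖ ≤ ℓ t * ‖x - y‖)
    (ξ : EuclideanSpace ℝ (Fin n))
    (α₀ M : ℝ) (hα₀ : α₀ = ⨅ j, α j)
    (hM : M = ∑ j, T ^ (α j - α₀) * Real.Gamma α₀ / Real.Gamma (α j)) :
    ∀ φ ψ : ℝ → EuclideanSpace ℝ (Fin n),
      ContinuousOn φ (Icc 0 T) → ContinuousOn ψ (Icc 0 T) →
      ∀ t ∈ Icc (0:ℝ) T,
        ‖caraOp α f ξ φ t - caraOp α f ξ ψ t‖ ≤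
          rlInt α₀ (fun s => M * ℓ s * ‖φ s - ψ s‖) t :=
  caraOp_contraction_estimate_general n hn T α hα p hp f hcar hgrowth ℓ hℓ hlip ξ α₀ M hα₀ hM
end

section
/- For every p ∈ (1,∞) and every T > 0 there exists σ ∈ L^p(0,T;ℝ) such that the (a.e. defined) function t ↦ J^{1/p}σ(t) = (1/Γ(1/p)) ∫₀ᵗ (t−s)^{1/p − 1} σ(s) ds is essentially unbounded on [0,T], i.e., for every M > 0 the set {t ∈ [0,T] : |J^{1/p}σ(t)| > M} has positive Lebesgue measure. -/
/-!
Take `α = 1/p`, `α < γ < 1`, `0 < t₀ < 1` and `σ(s) = (t₀ - s)^(-α) (-log (t₀ - s))^(-γ)` on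
`[0, t₀)`. Then `|σ|^p = (t₀ - s)⁻¹ (-log (t₀ - s))^(-γp)` has the integrable antiderivative
`(-log (t₀ - s))^(1 - γp) / (γp - 1)` because `γp > 1`, so `σ ∈ L^p`. For `t = t₀ - h` and
`t - s ≥ h` we have `t₀ - s ≤ 2 (t - s)`, so the kernel `(t - s)^(α - 1)` cancels the power of
`t₀ - s` up to `2^(-α)`, and `J^α σ(t) ≳ ∫_h^{t₀/2} x⁻¹ (-log x)^(-γ) dx`, which grows like
`(-log h)^(1 - γ)` as `h → 0` because `γ < 1`. Hence `J^α σ` exceeds every bound on a left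
neighbourhood of `t₀`.
-/

open MeasureTheory Real Set

open Filter Topology

noncomputable section

def hardyLittlewoodProfile (α γ x : ℝ) : ℝ := x ^ (-α) * (-log x) ^ (-γ)

def hardyLittlewoodFun (α γ t₀ : ℝ) : ℝ → ℝ :=
  (Ico 0 t₀).indicator fun s => hardyLittlewoodProfile α γ (t₀ - s)

end

section Profile

variable {α γ x : ℝ}

lemma hardyLittlewoodProfile_nonneg (hx0 : 0 ≤ x) (hx1 : x ≤ 1) :
    0 ≤ hardyLittlewoodProfile α γ x :=
  mul_nonneg (rpow_nonneg hx0 _) (rpow_nonneg (neg_nonneg.2 (log_nonpos hx0 hx1)) _)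

lemma hardyLittlewoodProfile_rpow (hx0 : 0 ≤ x) (hx1 : x ≤ 1) (p : ℝ) :
    hardyLittlewoodProfile α γ x ^ p = hardyLittlewoodProfile (α * p) (γ * p) x := by
  have hlog : 0 ≤ -log x := neg_nonneg.2 (log_nonpos hx0 hx1)
  rw [hardyLittlewoodProfile, hardyLittlewoodProfile, mul_rpow (rpow_nonneg hx0 _)
    (rpow_nonneg hlog _), ← rpow_mul hx0, ← rpow_mul hlog, neg_mul, neg_mul]

lemma measurable_hardyLittlewoodProfile : Measurable (hardyLittlewoodProfile α γ) := by
  unfold hardyLittlewoodProfile; fun_prop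

lemma continuousAt_hardyLittlewoodProfile (hx0 : 0 < x) (hx1 : x < 1) :
    ContinuousAt (hardyLittlewoodProfile α γ) x :=
  (continuousAt_id.rpow_const (Or.inl hx0.ne')).mul
    ((continuousAt_log hx0.ne').neg.rpow_const (Or.inl (neg_pos.2 (log_neg hx0 hx1)).ne'))

lemma hasDerivAt_neg_log_rpow_div {q : ℝ} (hq : q ≠ 1) (hx0 : 0 < x) (hx1 : x < 1) :
    HasDerivAt (fun y => (-log y) ^ (1 - q) / (q - 1)) (hardyLittlewoodProfile 1 q x) x := by
  have hlog : 0 < -log x := neg_pos.2 (log_neg hx0 hx1)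
  refine (((hasDerivAt_log hx0.ne').fun_neg.rpow_const (p := 1 - q) (Or.inl hlog.ne')).div_const
    (q - 1)).congr_deriv ?_
  rw [hardyLittlewoodProfile, rpow_neg_one, sub_sub_cancel_left]
  field_simp [sub_ne_zero.2 hq]
  ring

end Profile

section Integrals

variable {a b q : ℝ}

/-- At `0` the junk values `log 0 = 0` and `0 ^ (1 - q) = 0` agree with the limit. -/
lemma continuousWithinAt_neg_log_rpow_zero (hq : 1 < q) :
    ContinuousWithinAt (fun y => (-log y) ^ (1 - q) / (q - 1)) (Ici 0) 0 := by
  rw [← continuousWithinAt_Ioi_iff_Ici, ContinuousWithinAt, log_zero, neg_zero,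
    zero_rpow (by linarith), zero_div]
  have hlog : Tendsto (fun y => -log y) (𝓝[>] 0) atTop :=
    tendsto_neg_atBot_atTop.comp tendsto_log_nhdsGT_zero
  simpa [neg_sub] using ((tendsto_rpow_neg_atTop (sub_pos.2 hq)).comp hlog).div_const (q - 1)

lemma integrableOn_hardyLittlewoodProfile_one (hq : 1 < q) (ha : a < 1) :
    IntegrableOn (hardyLittlewoodProfile 1 q) (Ioc 0 a) := by
  refine intervalIntegral.integrableOn_deriv_of_nonneg
    (g := fun y => (-log y) ^ (1 - q) / (q - 1)) ?_
    (fun x hx => hasDerivAt_neg_log_rpow_div hq.ne' hx.1 (hx.2.trans ha))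
    (fun x hx => hardyLittlewoodProfile_nonneg hx.1.le (hx.2.trans ha).le)
  intro x hx
  rcases hx.1.eq_or_lt with rfl | hx0
  · exact (continuousWithinAt_neg_log_rpow_zero hq).mono Icc_subset_Ici_self
  · exact (hasDerivAt_neg_log_rpow_div hq.ne' hx0 (hx.2.trans_lt ha)).continuousAt
      |>.continuousWithinAt

lemma integral_hardyLittlewoodProfile_one (hq : q ≠ 1) (hb : 0 < b) (hba : b ≤ a)
    (ha : a < 1) :
    ∫ x in b..a, hardyLittlewoodProfile 1 q x
      = ((-log b) ^ (1 - q) - (-log a) ^ (1 - q)) / (1 - q) := by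
  have hderiv : ∀ x ∈ uIcc b a,
      HasDerivAt (fun y => (-log y) ^ (1 - q) / (q - 1)) (hardyLittlewoodProfile 1 q x) x := by
    intro x hx
    rw [uIcc_of_le hba] at hx
    exact hasDerivAt_neg_log_rpow_div hq (hb.trans_le hx.1) (hx.2.trans_lt ha)
  rw [intervalIntegral.integral_eq_sub_of_hasDerivAt hderiv
    (ContinuousOn.intervalIntegrable fun x hx => ?_)]
  · rw [← neg_sub q 1, div_neg]
    ring
  · rw [uIcc_of_le hba] at hx
    exact (continuousAt_hardyLittlewoodProfile (hb.trans_le hx.1) (hx.2.trans_lt ha))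
      |>.continuousWithinAt

end Integrals

lemma two_rpow_neg_mul_hardyLittlewoodProfile_one_le {α γ h x : ℝ} (hα : 0 ≤ α) (hγ : 0 ≤ γ)
    (hh : 0 < h) (hhx : h ≤ x) (hxh : x + h < 1) :
    2 ^ (-α) * hardyLittlewoodProfile 1 γ x ≤ x ^ (α - 1) * hardyLittlewoodProfile α γ (x + h) := by
  have hx : 0 < x := hh.trans_le hhx
  have hlog : 0 < -log (x + h) := neg_pos.2 (log_neg (by linarith) hxh)
  have hpow : (2 * x) ^ (-α) ≤ (x + h) ^ (-α) :=
    rpow_le_rpow_of_nonpos (by linarith) (by linarith) (neg_nonpos.2 hα)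
  have hlog_le : -log (x + h) ≤ -log x := neg_le_neg (log_le_log hx (by linarith))
  calc 2 ^ (-α) * hardyLittlewoodProfile 1 γ x
      = x ^ (α - 1) * ((2 * x) ^ (-α) * (-log x) ^ (-γ)) := by
        rw [hardyLittlewoodProfile, mul_rpow zero_le_two hx.le,
          show (-1 : ℝ) = α - 1 + -α by ring, rpow_add hx]
        ring
    _ ≤ x ^ (α - 1) * ((x + h) ^ (-α) * (-log (x + h)) ^ (-γ)) := by
        gcongr x ^ (α - 1) * ?_
        exact mul_le_mul hpow (rpow_le_rpow_of_nonpos hlog hlog_le (neg_nonpos.2 hγ))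
          (rpow_nonneg (hlog.le.trans hlog_le) _) (rpow_nonneg (by linarith) _)

lemma le_integral_rpow_mul_hardyLittlewoodProfile {α γ h a t : ℝ} (hα : 0 < α) (hγ0 : 0 ≤ γ)
    (hγ1 : γ < 1) (hh : 0 < h) (hha : h ≤ a) (hat : a ≤ t) (hth : t + h < 1) :
    2 ^ (-α) * (((-log h) ^ (1 - γ) - (-log a) ^ (1 - γ)) / (1 - γ))
      ≤ ∫ x in 0..t, x ^ (α - 1) * hardyLittlewoodProfile α γ (x + h) := by
  have ht : 0 ≤ t := by linarith
  have hint : IntervalIntegrable (fun x => x ^ (α - 1) * hardyLittlewoodProfile α γ (x + h))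
      volume 0 t := by
    refine (intervalIntegral.intervalIntegrable_rpow' (by linarith)).mul_continuousOn
      fun x hx => ?_
    rw [uIcc_of_le ht] at hx
    exact (ContinuousAt.comp (f := fun y => y + h)
      (continuousAt_hardyLittlewoodProfile (by linarith [hx.1]) (by linarith [hx.2]))
      (continuous_add_const h).continuousAt).continuousWithinAt
  have hnonneg : 0 ≤ᵐ[volume.restrict (Ioc 0 t)]
      fun x => x ^ (α - 1) * hardyLittlewoodProfile α γ (x + h) := by
    filter_upwards [ae_restrict_mem measurableSet_Ioc] with x hx
    exact mul_nonneg (rpow_nonneg hx.1.le _)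
      (hardyLittlewoodProfile_nonneg (by linarith [hx.1]) (by linarith [hx.2]))
  have hcont : ContinuousOn (hardyLittlewoodProfile 1 γ) (uIcc h a) := by
    rw [uIcc_of_le hha]
    exact fun x hx => (continuousAt_hardyLittlewoodProfile (hh.trans_le hx.1)
      (by linarith [hx.2])).continuousWithinAt
  have hsub : uIcc h a ⊆ uIcc 0 t := by
    rw [uIcc_of_le hha, uIcc_of_le ht]
    exact Icc_subset_Icc hh.le hat
  calc 2 ^ (-α) * (((-log h) ^ (1 - γ) - (-log a) ^ (1 - γ)) / (1 - γ))
      = ∫ x in h..a, 2 ^ (-α) * hardyLittlewoodProfile 1 γ x := by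
        rw [intervalIntegral.integral_const_mul,
          integral_hardyLittlewoodProfile_one hγ1.ne hh hha (by linarith)]
    _ ≤ ∫ x in h..a, x ^ (α - 1) * hardyLittlewoodProfile α γ (x + h) :=
        intervalIntegral.integral_mono_on hha (continuousOn_const.mul hcont).intervalIntegrable
          (hint.mono_set hsub) fun x hx =>
            two_rpow_neg_mul_hardyLittlewoodProfile_one_le hα.le hγ0 hh hx.1 (by linarith [hx.2])
    _ ≤ ∫ x in 0..t, x ^ (α - 1) * hardyLittlewoodProfile α γ (x + h) :=
        intervalIntegral.integral_mono_interval hh.le hha hat hnonneg hint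

section HardyLittlewoodFun

variable {α γ t₀ : ℝ}

lemma measurable_hardyLittlewoodFun : Measurable (hardyLittlewoodFun α γ t₀) :=
  (measurable_hardyLittlewoodProfile.comp (measurable_const.sub measurable_id)).indicator
    measurableSet_Ico

lemma memLp_hardyLittlewoodFun {p : ℝ} (hp : 0 < p) (hαp : α * p = 1) (hγp : 1 < γ * p)
    (ht₀1 : t₀ < 1) : MemLp (hardyLittlewoodFun α γ t₀) (ENNReal.ofReal p) := by
  rw [← integrable_norm_rpow_iff measurable_hardyLittlewoodFun.aestronglyMeasurable
    (by simpa using hp) ENNReal.ofReal_ne_top, ENNReal.toReal_ofReal hp.le]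
  have hnorm : (fun s => ‖hardyLittlewoodFun α γ t₀ s‖ ^ p)
      = (Ico 0 t₀).indicator fun s => hardyLittlewoodProfile 1 (γ * p) (t₀ - s) := by
    ext s
    by_cases hs : s ∈ Ico 0 t₀
    · have h0 : 0 ≤ t₀ - s := by linarith [hs.2]
      have h1 : t₀ - s ≤ 1 := by linarith [hs.1]
      rw [hardyLittlewoodFun, indicator_of_mem hs, indicator_of_mem hs, norm_of_nonneg
        (hardyLittlewoodProfile_nonneg h0 h1), hardyLittlewoodProfile_rpow h0 h1, hαp]
    · rw [hardyLittlewoodFun, indicator_of_notMem hs, indicator_of_notMem hs, norm_zero,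
        zero_rpow hp.ne']
  rw [hnorm, integrable_indicator_iff measurableSet_Ico]
  rcases le_or_gt t₀ 0 with ht₀0 | ht₀0
  · simp [Ico_eq_empty_of_le ht₀0]
  have hreflect := ((intervalIntegrable_iff_integrableOn_Ioc_of_le ht₀0.le).2
    (integrableOn_hardyLittlewoodProfile_one hγp ht₀1)).comp_sub_left t₀
  rw [sub_zero, sub_self] at hreflect
  exact ((integrableOn_Icc_iff_integrableOn_Ioc (by finiteness)).2
    ((intervalIntegrable_iff_integrableOn_Ioc_of_le ht₀0.le).1 hreflect.symm)).mono_set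
    Ico_subset_Icc_self

lemma integral_rpow_smul_hardyLittlewoodFun {t : ℝ} (ht0 : 0 ≤ t) (ht : t < t₀) :
    ∫ s in 0..t, (t - s) ^ (α - 1) • hardyLittlewoodFun α γ t₀ s
      = ∫ x in 0..t, x ^ (α - 1) * hardyLittlewoodProfile α γ (x + (t₀ - t)) := by
  have hreflect := intervalIntegral.integral_comp_sub_left
    (fun x => x ^ (α - 1) * hardyLittlewoodProfile α γ (x + (t₀ - t))) t (a := 0) (b := t)
  rw [sub_self, sub_zero] at hreflect
  rw [← hreflect]
  refine intervalIntegral.integral_congr fun s hs => ?_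
  rw [uIcc_of_le ht0] at hs
  have hs' : s ∈ Ico 0 t₀ := ⟨hs.1, hs.2.trans_lt ht⟩
  rw [smul_eq_mul, hardyLittlewoodFun, indicator_of_mem hs', sub_add_sub_cancel']

lemma rlInt_hardyLittlewoodFun_ge (hα : 0 < α) (hγ0 : 0 ≤ γ) (hγ1 : γ < 1) (ht₀1 : t₀ < 1)
    {t : ℝ} (ht : t ∈ Ioo (t₀ / 2) t₀) :
    (Gamma α)⁻¹ * (2 ^ (-α) *
        (((-log (t₀ - t)) ^ (1 - γ) - (-log (t₀ / 2)) ^ (1 - γ)) / (1 - γ)))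
      ≤ rlInt α (hardyLittlewoodFun α γ t₀) t := by
  obtain ⟨ht1, ht2⟩ := ht
  rw [rlInt, smul_eq_mul, integral_rpow_smul_hardyLittlewoodFun (by linarith) ht2]
  exact mul_le_mul_of_nonneg_left
    (le_integral_rpow_mul_hardyLittlewoodProfile hα hγ0 hγ1 (by linarith) (by linarith)
      ht1.le (by linarith))
    (inv_nonneg.2 (Gamma_pos_of_pos hα).le)

lemma tendsto_rlInt_hardyLittlewoodFun (hα : 0 < α) (hγ0 : 0 ≤ γ) (hγ1 : γ < 1)
    (ht₀ : 0 < t₀) (ht₀1 : t₀ < 1) :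
    Tendsto (rlInt α (hardyLittlewoodFun α γ t₀)) (𝓝[<] t₀) atTop := by
  have hgap : Tendsto (fun t => t₀ - t) (𝓝[<] t₀) (𝓝[>] 0) := by
    refine tendsto_nhdsWithin_of_tendsto_nhds_of_eventually_within _ ?_ ?_
    · simpa using ((continuous_sub_left t₀).tendsto t₀).mono_left nhdsWithin_le_nhds
    · filter_upwards [self_mem_nhdsWithin] with t ht using sub_pos.2 (mem_Iio.1 ht)
  have hlog : Tendsto (fun t => (-log (t₀ - t)) ^ (1 - γ)) (𝓝[<] t₀) atTop :=
    (tendsto_rpow_atTop (sub_pos.2 hγ1)).comp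
      (tendsto_neg_atBot_atTop.comp (tendsto_log_nhdsGT_zero.comp hgap))
  refine tendsto_atTop_mono' _ (eventually_of_mem (Ioo_mem_nhdsLT (by linarith))
    fun t ht => rlInt_hardyLittlewoodFun_ge hα hγ0 hγ1 ht₀1 ht) ?_
  refine .const_mul_atTop (inv_pos.2 (Gamma_pos_of_pos hα)) (.const_mul_atTop (by positivity)
    (.atTop_div_const (sub_pos.2 hγ1) ?_))
  simpa only [sub_eq_add_neg] using tendsto_atTop_add_const_right _ _ hlog

end HardyLittlewoodFun

lemma measure_pos_of_mem_nhdsLT {μ : Measure ℝ} [μ.IsOpenPosMeasure] {a : ℝ} {s : Set ℝ}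
    (hs : s ∈ 𝓝[<] a) : 0 < μ s := by
  obtain ⟨l, hl, hsub⟩ := mem_nhdsLT_iff_exists_Ioo_subset.1 hs
  exact ((Measure.measure_Ioo_pos μ).2 hl).trans_le (measure_mono hsub)

/-- Hardy–Littlewood example: for every `p ∈ (1,∞)` and `T > 0` there exists `σ ∈ L^p(0,T)`
whose Riemann–Liouville integral `J^{1/p} σ` is essentially unbounded on `[0,T]`. -/
theorem exists_memLp_rlInt_essentially_unbounded (p T : ℝ) (hp : 1 < p) (hT : 0 < T) :
    ∃ σ : ℝ → ℝ, MemLp σ (ENNReal.ofReal p) (volume.restrict (Icc (0:ℝ) T)) ∧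
      ∀ M > (0:ℝ), 0 < volume {t ∈ Icc (0:ℝ) T | M < |rlInt (1 / p) σ t|} := by
  have hp0 : 0 < p := by linarith
  have hα : 0 < 1 / p := by positivity
  have hα1 : 1 / p < 1 := (div_lt_one hp0).2 hp
  have hαp : 1 / p * p = 1 := one_div_mul_cancel hp0.ne'
  set γ := (1 / p + 1) / 2 with hγ
  have hγ1 : γ < 1 := by linarith
  have hγp : 1 < γ * p := by
    have : γ * p = (1 + p) / 2 := by rw [div_mul_eq_mul_div, add_mul, hαp, one_mul]
    linarith
  set t₀ := min T (1 / 2)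
  have ht₀ : 0 < t₀ := lt_min hT one_half_pos
  have ht₀1 : t₀ < 1 := (min_le_right _ _).trans_lt one_half_lt_one
  refine ⟨hardyLittlewoodFun (1 / p) γ t₀,
    (memLp_hardyLittlewoodFun hp0 hαp hγp ht₀1).restrict _,
    fun M _ => measure_pos_of_mem_nhdsLT (a := t₀) ?_⟩
  filter_upwards [Ioo_mem_nhdsLT ht₀, (tendsto_rlInt_hardyLittlewoodFun hα (by positivity)
    hγ1 ht₀ ht₀1).eventually_gt_atTop M] with t ht hM
  exact ⟨⟨ht.1.le, ht.2.le.trans (min_le_left _ _)⟩, hM.trans_le (le_abs_self _)⟩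
end
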